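/- arXiv:1810.03672 — 9 statements merged into one kernel-verified Lean document; each statement's English description precedes it below -/
import Mathlib

section
/- Let P ⊆ ℝ^d be a full-dimensional lattice polytope with irredundant facet presentation h_i(p) = ⟨p,n_i⟩ + a_i ≥ 0 (i = 1,…,r), lattice points A = P ∩ ℤ^d, and positive weights w = (w_m)_{m∈A}. Then the following are equivalent: (1) P has strict linear precision for w, i.e. β_w(p)·p = Σ_{m∈A} w_m β_m(p)·m for all p ∈ P; (2) Σ_{i=1}^r n_i = 0 and there is a nonzero constant c such that β_w(p) = c for all p ∈ ℝ^d. -/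
open Finset

noncomputable section

/-- Lattice distance function `h_i(p) = ⟨p, n_i⟩ + a_i` on `ℝ^d`. -/
def hR {d r : ℕ} (n : Fin r → Fin d → ℤ) (a : Fin r → ℤ) (i : Fin r) (p : Fin d → ℝ) : ℝ :=
  (∑ l, p l * (n i l : ℝ)) + (a i : ℝ)

/-- Lattice distance `h_i(m) = ⟨m, n_i⟩ + a_i` of a lattice point, an integer. -/
def hZ {d r : ℕ} (n : Fin r → Fin d → ℤ) (a : Fin r → ℤ) (i : Fin r) (m : Fin d → ℤ) : ℤ :=
  (∑ l, m l * n i l) + a i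

/-- The polytope `P = {p : h_i(p) ≥ 0 ∀ i}`. -/
def latticePolytope {d r : ℕ} (n : Fin r → Fin d → ℤ) (a : Fin r → ℤ) : Set (Fin d → ℝ) :=
  {p | ∀ i, 0 ≤ hR n a i p}

/-- Coercion of a lattice point of `ℤ^d` to `ℝ^d`. -/
def coeZ {d : ℕ} (m : Fin d → ℤ) : Fin d → ℝ := fun l => (m l : ℝ)

/-- Krasauskas toric blending polynomial `β_m(p) = ∏_i h_i(p)^{h_i(m)}` (with `0^0 = 1`). -/
def toricBeta {d r : ℕ} (n : Fin r → Fin d → ℤ) (a : Fin r → ℤ) (m : Fin d → ℤ)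
    (p : Fin d → ℝ) : ℝ :=
  ∏ i, hR n a i p ^ (hZ n a i m).toNat

/-- `β_w(p) = ∑_{m ∈ A} w_m β_m(p)`. -/
def toricBetaW {d r : ℕ} (n : Fin r → Fin d → ℤ) (a : Fin r → ℤ) (A : Finset (Fin d → ℤ))
    (w : (Fin d → ℤ) → ℝ) (p : Fin d → ℝ) : ℝ :=
  ∑ m ∈ A, w m * toricBeta n a m p

/-- `P` is a full-dimensional lattice polytope with irredundant facet presentation given by
`n_i, a_i` and lattice point set `A = P ∩ ℤ^d`. -/
def IsFacetPresentation {d r : ℕ} (n : Fin r → Fin d → ℤ) (a : Fin r → ℤ)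
    (A : Finset (Fin d → ℤ)) : Prop :=
  IsCompact (latticePolytope n a) ∧
  (interior (latticePolytope n a)).Nonempty ∧
  (∀ m : Fin d → ℤ, m ∈ A ↔ coeZ m ∈ latticePolytope n a) ∧
  latticePolytope n a = convexHull ℝ (coeZ '' (A : Set (Fin d → ℤ))) ∧
  (∀ i, ∃ p ∈ latticePolytope n a, hR n a i p = 0 ∧ ∀ k, k ≠ i → 0 < hR n a k p)

/-- `P` has strict linear precision for the weights `w`:
`β_w(p)·p = ∑_{m ∈ A} w_m β_m(p)·m` for all `p ∈ P`. -/
def StrictLinearPrecision {d r : ℕ} (n : Fin r → Fin d → ℤ) (a : Fin r → ℤ)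
    (A : Finset (Fin d → ℤ)) (w : (Fin d → ℤ) → ℝ) : Prop :=
  ∀ p ∈ latticePolytope n a,
    toricBetaW n a A w p • p = ∑ m ∈ A, (w m * toricBeta n a m p) • coeZ m

namespace SLPaux

variable {d r : ℕ} (n : Fin r → Fin d → ℤ) (a : Fin r → ℤ)

/-- inner product of `u` with the `i`-th normal. -/
def ip (u : Fin d → ℝ) (i : Fin r) : ℝ := ∑ l, u l * (n i l : ℝ)

/-- exponent of facet `i` for lattice point `m`. -/
def ee (m : Fin d → ℤ) (i : Fin r) : ℕ := (hZ n a i m).toNat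

lemma hR_add_smul (p u : Fin d → ℝ) (t : ℝ) (i : Fin r) :
    hR n a i (p + t • u) = hR n a i p + ip n u i * t := by
  have h1 : ∀ l ∈ (Finset.univ : Finset (Fin d)), (p + t • u) l * (n i l : ℝ)
      = p l * (n i l : ℝ) + u l * (n i l : ℝ) * t := by
    intro l _; simp only [Pi.add_apply, Pi.smul_apply, smul_eq_mul]; ring
  unfold hR ip
  rw [Finset.sum_congr rfl h1, Finset.sum_add_distrib, ← Finset.sum_mul]
  ring

/-- the "partial derivative" auxiliary polynomial `G_j`. -/
def Gv (A : Finset (Fin d → ℤ)) (w : (Fin d → ℤ) → ℝ) (j : Fin r) (p : Fin d → ℝ) : ℝ :=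
  ∑ m ∈ A, w m * ((ee n a m j : ℝ) * hR n a j p ^ (ee n a m j - 1) *
    ∏ k ∈ Finset.univ.erase j, hR n a k p ^ ee n a m k)

/-- `g_j(p) = ∑ w_m h_j(m) β_m(p)`. -/
def gval (A : Finset (Fin d → ℤ)) (w : (Fin d → ℤ) → ℝ) (j : Fin r) (p : Fin d → ℝ) : ℝ :=
  ∑ m ∈ A, w m * ((ee n a m j : ℝ) * toricBeta n a m p)

lemma gval_eq_hR_mul_Gv (A : Finset (Fin d → ℤ)) (w : (Fin d → ℤ) → ℝ) (j : Fin r)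
    (p : Fin d → ℝ) : gval n a A w j p = hR n a j p * Gv n a A w j p := by
  rw [Gv, Finset.mul_sum]
  refine Finset.sum_congr rfl fun m _ => ?_
  rcases Nat.eq_zero_or_pos (ee n a m j) with h0 | hpos
  · simp [h0]
  · have : hR n a j p ^ ee n a m j
        = hR n a j p * hR n a j p ^ (ee n a m j - 1) := by
      conv_lhs => rw [← Nat.succ_pred_eq_of_pos hpos]
      rw [pow_succ, Nat.pred_eq_sub_one]
      ring
    rw [toricBeta, ← Finset.mul_prod_erase Finset.univ _ (Finset.mem_univ j)]
    have he : ∀ k, (hZ n a k m).toNat = ee n a m k := fun k => rfl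
    simp only [he, this]
    ring

open Polynomial in
/-- the restriction of `β_w` to the line `t ↦ p + t u`, as a polynomial in `t`. -/
def FF (A : Finset (Fin d → ℤ)) (w : (Fin d → ℤ) → ℝ) (p u : Fin d → ℝ) : Polynomial ℝ :=
  ∑ m ∈ A, Polynomial.C (w m) *
    ∏ i, (Polynomial.C (hR n a i p) + Polynomial.C (ip n u i) * Polynomial.X) ^ ee n a m i

lemma eval_FF (A : Finset (Fin d → ℤ)) (w : (Fin d → ℤ) → ℝ) (p u : Fin d → ℝ) (t : ℝ) :
    (FF n a A w p u).eval t = toricBetaW n a A w (p + t • u) := by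
  simp only [FF, Polynomial.eval_finset_sum, Polynomial.eval_mul, Polynomial.eval_C,
    Polynomial.eval_prod, Polynomial.eval_pow, Polynomial.eval_add, Polynomial.eval_X,
    toricBetaW, toricBeta]
  refine Finset.sum_congr rfl fun m _ => ?_
  congr 1
  refine Finset.prod_congr rfl fun i _ => ?_
  have : (hZ n a i m).toNat = ee n a m i := rfl
  rw [this, hR_add_smul]

lemma derivative_finset_prod {ι : Type*} [DecidableEq ι] (s : Finset ι) (f : ι → Polynomial ℝ) :
    Polynomial.derivative (∏ i ∈ s, f i)
      = ∑ i ∈ s, (∏ j ∈ s.erase i, f j) * Polynomial.derivative (f i) := by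
  classical
  induction s using Finset.induction_on with
  | empty => simp
  | @insert b s ha ih =>
    have h1 : ∀ i ∈ s, (∏ j ∈ (insert b s).erase i, f j)
        = f b * ∏ j ∈ s.erase i, f j := by
      intro i hi
      rw [Finset.erase_insert_of_ne (by rintro rfl; exact ha hi), Finset.prod_insert
        (fun hb => ha (Finset.mem_of_mem_erase hb))]
    rw [Finset.prod_insert ha, Polynomial.derivative_mul, ih, Finset.sum_insert ha,
      Finset.erase_insert ha, Finset.mul_sum]
    congr 1
    · ring
    · refine Finset.sum_congr rfl fun i hi => ?_
      rw [h1 i hi]; ring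

lemma derivative_FF_eval (A : Finset (Fin d → ℤ)) (w : (Fin d → ℤ) → ℝ) (p u : Fin d → ℝ)
    (t : ℝ) :
    (Polynomial.derivative (FF n a A w p u)).eval t
      = ∑ j, ip n u j * Gv n a A w j (p + t • u) := by
  simp only [FF, Polynomial.derivative_sum, Polynomial.derivative_C_mul,
    derivative_finset_prod, Polynomial.derivative_pow, Polynomial.derivative_add,
    Polynomial.derivative_C, Polynomial.derivative_mul, Polynomial.derivative_X,
    zero_add, mul_one, zero_mul, mul_zero]
  simp only [Polynomial.eval_finset_sum, Polynomial.eval_mul, Polynomial.eval_C,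
    Polynomial.eval_prod, Polynomial.eval_pow, Polynomial.eval_add, Polynomial.eval_X,
    Polynomial.eval_natCast, Finset.mul_sum]
  rw [Finset.sum_comm]
  refine Finset.sum_congr rfl fun j _ => ?_
  rw [Gv, Finset.mul_sum]
  refine Finset.sum_congr rfl fun m _ => ?_
  simp only [hR_add_smul]
  ring

lemma hZ_cast (i : Fin r) (m : Fin d → ℤ) :
    ((hZ n a i m : ℤ) : ℝ) = hR n a i (coeZ m) := by
  rw [hZ, hR]; push_cast [coeZ]; ring

lemma ee_cast {A : Finset (Fin d → ℤ)}
    (hA : ∀ m : Fin d → ℤ, m ∈ A ↔ coeZ m ∈ latticePolytope n a)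
    {m : Fin d → ℤ} (hm : m ∈ A) (i : Fin r) :
    ((ee n a m i : ℕ) : ℝ) = ((hZ n a i m : ℤ) : ℝ) := by
  have h0 : (0:ℝ) ≤ ((hZ n a i m : ℤ) : ℝ) := by
    rw [hZ_cast]; exact (hA m).1 hm i
  have h0' : (0:ℤ) ≤ hZ n a i m := by exact_mod_cast h0
  rw [ee]
  conv_rhs => rw [← Int.toNat_of_nonneg h0']
  rw [Int.cast_natCast]

lemma interior_pos {p : Fin d → ℝ} (hp : p ∈ interior (latticePolytope n a)) (j : Fin r)
    (hj : n j ≠ 0) : 0 < hR n a j p := by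
  have h0 : 0 ≤ hR n a j p := interior_subset hp j
  rcases h0.lt_or_eq with h | h
  · exact h
  exfalso
  set u := coeZ (n j) with hu
  have hcont : Continuous fun t : ℝ => p + t • u := by continuity
  have hnhds : (fun t : ℝ => p + t • u) ⁻¹' interior (latticePolytope n a) ∈ nhds (0:ℝ) :=
    hcont.continuousAt.preimage_mem_nhds (isOpen_interior.mem_nhds (by simpa using hp))
  rw [Metric.mem_nhds_iff] at hnhds
  obtain ⟨ε, hε, hb⟩ := hnhds
  have hmem : p + (-(ε/2)) • u ∈ latticePolytope n a := by
    refine interior_subset (hb ?_)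
    simp only [Metric.mem_ball, Real.dist_eq, sub_zero]
    rw [abs_neg, abs_of_pos (by linarith)]
    linarith
  have hsq : 0 < ip n u j := by
    obtain ⟨l0, hl0⟩ := Function.ne_iff.mp hj
    refine Finset.sum_pos' (fun l _ => ?_) ⟨l0, Finset.mem_univ l0, ?_⟩
    · exact mul_self_nonneg _
    · have : ((n j l0 : ℤ) : ℝ) ≠ 0 := by exact_mod_cast hl0
      exact mul_self_pos.mpr this
  have := hmem j
  rw [hR_add_smul, ← h] at this
  nlinarith

lemma A_nonempty {A : Finset (Fin d → ℤ)}
    (hconv : latticePolytope n a = convexHull ℝ (coeZ '' (A : Set (Fin d → ℤ))))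
    (hint : (interior (latticePolytope n a)).Nonempty) : A.Nonempty := by
  obtain ⟨p, hp⟩ := hint
  rcases A.eq_empty_or_nonempty with h | h
  · exfalso
    have : p ∈ latticePolytope n a := interior_subset hp
    rw [hconv, h] at this
    simp at this
  · exact h

lemma betaW_pos {A : Finset (Fin d → ℤ)} {w : (Fin d → ℤ) → ℝ}
    (hA : ∀ m : Fin d → ℤ, m ∈ A ↔ coeZ m ∈ latticePolytope n a)
    (hconv : latticePolytope n a = convexHull ℝ (coeZ '' (A : Set (Fin d → ℤ))))
    (hw : ∀ m ∈ A, 0 < w m)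
    {p : Fin d → ℝ} (hp : p ∈ interior (latticePolytope n a)) :
    0 < toricBetaW n a A w p := by
  have hAne : A.Nonempty := A_nonempty n a hconv ⟨p, hp⟩
  refine Finset.sum_pos (fun m hm => ?_) hAne
  refine mul_pos (hw m hm) (Finset.prod_pos fun i _ => ?_)
  rcases Nat.eq_zero_or_pos (hZ n a i m).toNat with h0 | hpos
  · rw [h0, pow_zero]; norm_num
  · have hz : 0 < hZ n a i m := by
      rcases lt_or_ge 0 (hZ n a i m) with h | h
      · exact h
      · exfalso; rw [Int.toNat_of_nonpos h] at hpos; exact lt_irrefl 0 hpos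
    have hpos' : 0 < hR n a i p := by
      by_cases hni : n i = 0
      · have h1 : hR n a i p = (a i : ℝ) := by simp [hR, hni]
        have h2 : hZ n a i m = a i := by simp [hZ, hni]
        rw [h1]
        rw [h2] at hz
        exact_mod_cast hz
      · exact interior_pos n a hp i hni
    positivity

lemma exists_ip_ne (hcomp : IsCompact (latticePolytope n a)) {p0 : Fin d → ℝ}
    (hp0 : p0 ∈ latticePolytope n a) {u : Fin d → ℝ} (hu : u ≠ 0) :
    ∃ j, ip n u j ≠ 0 := by
  by_contra h
  push_neg at h
  have hline : ∀ t : ℝ, p0 + t • u ∈ latticePolytope n a := by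
    intro t i
    rw [hR_add_smul, h, zero_mul, add_zero]
    exact hp0 i
  obtain ⟨R, hR'⟩ := isBounded_iff_forall_norm_le.mp hcomp.isBounded
  obtain ⟨l0, hl0⟩ := Function.ne_iff.mp hu
  set t : ℝ := (|R| + |p0 l0| + 1) / |u l0| with ht
  have hul : 0 < |u l0| := abs_pos.mpr hl0
  have h1 : ‖p0 + t • u‖ ≤ R := hR' _ (hline t)
  have h2 : |(p0 + t • u) l0| ≤ ‖p0 + t • u‖ := by
    simpa [Real.norm_eq_abs] using norm_le_pi_norm (p0 + t • u) l0
  have h3 : |t * u l0| - |p0 l0| ≤ |(p0 + t • u) l0| := by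
    have habs := abs_add_le ((p0 + t • u) l0) (-(p0 l0))
    simp only [abs_neg] at habs
    have hx : (p0 + t • u) l0 + -(p0 l0) = t * u l0 := by
      simp only [Pi.add_apply, Pi.smul_apply, smul_eq_mul]; ring
    rw [hx] at habs
    linarith
  have h4 : |t * u l0| = |R| + |p0 l0| + 1 := by
    rw [abs_mul, ht, abs_div, abs_abs]
    rw [div_mul_eq_mul_div, mul_div_assoc, div_self (ne_of_gt hul), mul_one]
    rw [abs_of_nonneg (by positivity)]
  have : R < |(p0 + t • u) l0| := by
    rw [h4] at h3
    have : R ≤ |R| := le_abs_self R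
    linarith
  linarith [le_trans h2 h1]

lemma slp_pairing {A : Finset (Fin d → ℤ)} {w : (Fin d → ℤ) → ℝ}
    (hA : ∀ m : Fin d → ℤ, m ∈ A ↔ coeZ m ∈ latticePolytope n a)
    (hslp : ∀ p ∈ latticePolytope n a,
      toricBetaW n a A w p • p = ∑ m ∈ A, (w m * toricBeta n a m p) • coeZ m)
    {p : Fin d → ℝ} (hp : p ∈ latticePolytope n a) (j : Fin r) :
    gval n a A w j p = hR n a j p * toricBetaW n a A w p := by
  have hv := hslp p hp
  have hl : ∀ l, toricBetaW n a A w p * p l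
      = ∑ m ∈ A, (w m * toricBeta n a m p) * (m l : ℝ) := by
    intro l
    have h := congrFun hv l
    simpa [Finset.sum_apply, coeZ] using h
  have step1 : gval n a A w j p
      = ∑ m ∈ A, (w m * toricBeta n a m p) * ((∑ l, (m l : ℝ) * (n j l : ℝ)) + (a j : ℝ)) := by
    refine Finset.sum_congr rfl fun m hm => ?_
    have h1 : ((ee n a m j : ℕ) : ℝ) = (∑ l, (m l : ℝ) * (n j l : ℝ)) + (a j : ℝ) := by
      rw [ee_cast n a hA hm j, hZ]
      push_cast [coeZ]
      ring
    rw [h1]; ring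
  rw [step1]
  have step2 : ∑ m ∈ A, (w m * toricBeta n a m p) * ((∑ l, (m l : ℝ) * (n j l : ℝ)) + (a j : ℝ))
      = (∑ l, (∑ m ∈ A, (w m * toricBeta n a m p) * (m l : ℝ)) * (n j l : ℝ))
        + (a j : ℝ) * toricBetaW n a A w p := by
    simp only [mul_add, Finset.sum_add_distrib, Finset.mul_sum]
    congr 1
    · rw [Finset.sum_comm]
      refine Finset.sum_congr rfl fun l _ => ?_
      rw [Finset.sum_mul]
      refine Finset.sum_congr rfl fun m _ => ?_
      ring
    · rw [toricBetaW, Finset.mul_sum]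
      refine Finset.sum_congr rfl fun m _ => ?_
      ring
  rw [step2]
  have step3 : ∀ l, (∑ m ∈ A, (w m * toricBeta n a m p) * (m l : ℝ)) * (n j l : ℝ)
      = (toricBetaW n a A w p * p l) * (n j l : ℝ) := by
    intro l; rw [← hl l]
  rw [Finset.sum_congr rfl fun l _ => step3 l, hR, add_mul, Finset.sum_mul]
  congr 1
  refine Finset.sum_congr rfl fun l _ => ?_
  ring

lemma sum_ip_eq (u : Fin d → ℝ) :
    ∑ j, ip n u j = ∑ l, u l * (((∑ j, n j) l : ℤ) : ℝ) := by
  have h1 : ∀ l, (((∑ j, n j) l : ℤ) : ℝ) = ∑ j, ((n j l : ℤ) : ℝ) := by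
    intro l; rw [Finset.sum_apply]; push_cast; rfl
  simp only [ip, h1, Finset.mul_sum]
  rw [Finset.sum_comm]

lemma exists_eps {p : Fin d → ℝ} (hp : p ∈ interior (latticePolytope n a)) (u : Fin d → ℝ) :
    ∃ ε > 0, ∀ t : ℝ, |t| < ε → p + t • u ∈ interior (latticePolytope n a) := by
  have hcont : Continuous fun t : ℝ => p + t • u := by continuity
  have hnhds : (fun t : ℝ => p + t • u) ⁻¹' interior (latticePolytope n a) ∈ nhds (0:ℝ) :=
    hcont.continuousAt.preimage_mem_nhds (isOpen_interior.mem_nhds (by simpa using hp))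
  rw [Metric.mem_nhds_iff] at hnhds
  obtain ⟨ε, hε, hb⟩ := hnhds
  refine ⟨ε, hε, fun t ht => hb ?_⟩
  simp only [Metric.mem_ball, Real.dist_eq, sub_zero]
  exact ht

lemma poly_eq_of_interval {F G : Polynomial ℝ} {ε : ℝ} (hε : 0 < ε)
    (h : ∀ t ∈ Set.Ioo (-ε) ε, F.eval t = G.eval t) : F = G := by
  have h0 : F - G = 0 := by
    apply Polynomial.eq_zero_of_infinite_isRoot
    apply Set.Infinite.mono (s := Set.Ioo (-ε) ε)
    · intro t ht
      simp only [Set.mem_setOf_eq, Polynomial.IsRoot, Polynomial.eval_sub, h t ht, sub_self]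
    · exact Set.Ioo_infinite (by linarith)
  exact sub_eq_zero.mp h0

lemma lambda_zero {F : Polynomial ℝ} {lam : ℝ}
    (h : Polynomial.derivative F = Polynomial.C lam * F)
    (h0 : F.eval 0 ≠ 0) : lam = 0 := by
  by_contra hlam
  have hF : F ≠ 0 := fun h' => h0 (by simp [h'])
  rcases Nat.eq_zero_or_pos F.natDegree with hdeg | hdeg
  · have hC : F = Polynomial.C (F.coeff 0) := Polynomial.eq_C_of_natDegree_eq_zero hdeg
    rw [hC, Polynomial.derivative_C, ← Polynomial.C_mul] at h
    have : lam * F.coeff 0 = 0 := by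
      have := congrArg (fun q => Polynomial.coeff q 0) h
      simpa using this.symm
    have hc0 : F.coeff 0 ≠ 0 := by
      intro hcc
      apply h0
      rw [hC, hcc]; simp
    rcases mul_eq_zero.mp this with h' | h'
    · exact hlam h'
    · exact hc0 h'
  · have h1 : (Polynomial.derivative F).natDegree < F.natDegree :=
      Polynomial.natDegree_derivative_lt (Nat.pos_iff_ne_zero.mp hdeg)
    rw [h, Polynomial.natDegree_C_mul hlam] at h1
    exact lt_irrefl _ h1

lemma gval_expand {A : Finset (Fin d → ℤ)} {w : (Fin d → ℤ) → ℝ}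
    (hA : ∀ m : Fin d → ℤ, m ∈ A ↔ coeZ m ∈ latticePolytope n a)
    (p : Fin d → ℝ) (j : Fin r) :
    gval n a A w j p
      = (∑ l, (∑ m ∈ A, (w m * toricBeta n a m p) * (m l : ℝ)) * (n j l : ℝ))
        + (a j : ℝ) * toricBetaW n a A w p := by
  have step1 : gval n a A w j p
      = ∑ m ∈ A, (w m * toricBeta n a m p) * ((∑ l, (m l : ℝ) * (n j l : ℝ)) + (a j : ℝ)) := by
    refine Finset.sum_congr rfl fun m hm => ?_
    have h1 : ((ee n a m j : ℕ) : ℝ) = (∑ l, (m l : ℝ) * (n j l : ℝ)) + (a j : ℝ) := by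
      rw [ee_cast n a hA hm j, hZ]
      push_cast [coeZ]
      ring
    rw [h1]; ring
  rw [step1]
  simp only [mul_add, Finset.sum_add_distrib, Finset.mul_sum]
  congr 1
  · rw [Finset.sum_comm]
    refine Finset.sum_congr rfl fun l _ => ?_
    rw [Finset.sum_mul]
    refine Finset.sum_congr rfl fun m _ => ?_
    ring
  · rw [toricBetaW, Finset.mul_sum]
    refine Finset.sum_congr rfl fun m _ => ?_
    ring

end SLPaux

open SLPaux in
/-- Strict linear precision for positive weights `w` holds iff the facet
normals sum to zero and `β_w` is a nonzero constant on `ℝ^d`. -/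
theorem strict_linear_precision_iff {d r : ℕ} (hd : 0 < d)
    (n : Fin r → Fin d → ℤ) (a : Fin r → ℤ) (A : Finset (Fin d → ℤ))
    (hP : IsFacetPresentation n a A)
    (w : (Fin d → ℤ) → ℝ) (hw : ∀ m ∈ A, 0 < w m) :
    StrictLinearPrecision n a A w ↔
      ((∑ i, n i) = 0 ∧ ∃ c : ℝ, c ≠ 0 ∧ ∀ p : Fin d → ℝ, toricBetaW n a A w p = c) := by
  rw [StrictLinearPrecision]
  obtain ⟨hcomp, hint, hA, hconv, hirr⟩ := hP
  constructor
  · intro hslp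
    obtain ⟨p0, hp0⟩ := hint
    have hbw : ∀ q ∈ interior (latticePolytope n a), 0 < toricBetaW n a A w q :=
      fun q hq => betaW_pos n a hA hconv hw hq
    have hGv : ∀ q ∈ interior (latticePolytope n a), ∀ j, n j ≠ 0 →
        Gv n a A w j q = toricBetaW n a A w q := by
      intro q hq j hj
      have h1 := slp_pairing n a hA hslp (interior_subset hq) j
      have h2 := gval_eq_hR_mul_Gv n a A w j q
      have h3 := interior_pos n a hq j hj
      exact mul_left_cancel₀ (ne_of_gt h3) (h2.symm.trans h1)
    have hdirsum : ∀ q ∈ interior (latticePolytope n a), ∀ u : Fin d → ℝ,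
        ∑ j, ip n u j * Gv n a A w j q = (∑ j, ip n u j) * toricBetaW n a A w q := by
      intro q hq u
      rw [Finset.sum_mul]
      refine Finset.sum_congr rfl fun j _ => ?_
      by_cases hj : n j = 0
      · have h0 : ip n u j = 0 := by simp [ip, hj]
        rw [h0, zero_mul, zero_mul]
      · rw [hGv q hq j hj]
    have hFderiv : ∀ p : Fin d → ℝ, p ∈ interior (latticePolytope n a) → ∀ u : Fin d → ℝ,
        Polynomial.derivative (FF n a A w p u)
          = Polynomial.C (∑ j, ip n u j) * FF n a A w p u := by
      intro p hp u
      obtain ⟨ε, hε, hball⟩ := exists_eps n a hp u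
      refine poly_eq_of_interval hε fun t ht => ?_
      have hq := hball t (by rw [abs_lt]; exact ⟨ht.1, ht.2⟩)
      rw [derivative_FF_eval, Polynomial.eval_mul, Polynomial.eval_C, eval_FF]
      exact hdirsum _ hq u
    have hNzero : (∑ j, n j) = 0 := by
      set N : Fin d → ℤ := ∑ j, n j with hN
      set u := coeZ N with hu
      have hlam := hFderiv p0 hp0 u
      have h0ne : (FF n a A w p0 u).eval 0 ≠ 0 := by
        rw [eval_FF]
        have hpp : p0 + (0:ℝ) • u = p0 := by simp
        rw [hpp]
        exact ne_of_gt (hbw p0 hp0)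
      have hlz := lambda_zero hlam h0ne
      have hsum : ∑ j, ip n u j = ∑ l, ((N l : ℤ) : ℝ)^2 := by
        rw [sum_ip_eq]
        refine Finset.sum_congr rfl fun l _ => ?_
        rw [hu]
        simp only [coeZ]
        rw [← hN]
        ring
      rw [hsum] at hlz
      funext l
      have hl : ((N l : ℤ) : ℝ)^2 = 0 :=
        (Finset.sum_eq_zero_iff_of_nonneg (fun l _ => sq_nonneg _)).mp hlz l (Finset.mem_univ l)
      have h0 : ((N l : ℤ) : ℝ) = 0 := by nlinarith [hl, sq_nonneg (((N l : ℤ) : ℝ))]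
      have : N l = 0 := by exact_mod_cast h0
      simpa using this
    refine ⟨hNzero, toricBetaW n a A w p0, ne_of_gt (hbw p0 hp0), ?_⟩
    intro q
    have hFd := hFderiv p0 hp0 (q - p0)
    have hzero : (∑ j, ip n (q - p0) j) = 0 := by
      rw [sum_ip_eq, hNzero]
      simp
    rw [hzero, Polynomial.C_0, zero_mul] at hFd
    have hC := Polynomial.eq_C_of_derivative_eq_zero hFd
    have e1 : toricBetaW n a A w q = (FF n a A w p0 (q - p0)).eval 1 := by
      rw [eval_FF]
      congr 1
      simp
    have e0 : toricBetaW n a A w p0 = (FF n a A w p0 (q - p0)).eval 0 := by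
      rw [eval_FF]
      congr 1
      simp
    rw [e1, e0, hC, Polynomial.eval_C, Polynomial.eval_C]
  · rintro ⟨hN, c, hc, Hc⟩
    intro p hp
    have hbwp : toricBetaW n a A w p = c := Hc p
    have hGsum : ∀ l : Fin d, ∑ j, (n j l : ℝ) * Gv n a A w j p = 0 := by
      intro l
      have hF : FF n a A w p (Pi.single l 1) = Polynomial.C c :=
        Polynomial.funext fun t => by rw [eval_FF, Hc, Polynomial.eval_C]
      have hd := derivative_FF_eval n a A w p (Pi.single l 1) 0
      rw [hF, Polynomial.derivative_C] at hd
      simp only [Polynomial.eval_zero] at hd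
      have hp0 : p + (0:ℝ) • (Pi.single l 1 : Fin d → ℝ) = p := by simp
      rw [hp0] at hd
      have hips : ∀ j, ip n (Pi.single l 1) j = (n j l : ℝ) := by
        intro j
        rw [ip, Finset.sum_eq_single l]
        · simp
        · intro b _ hbl
          rw [Pi.single_eq_of_ne hbl]
          ring
        · intro h; exact absurd (Finset.mem_univ l) h
      have hd' := hd.symm
      simp only [hips] at hd'
      exact hd'
    set y : Fin r → ℝ := fun j => Gv n a A w j p - c with hy
    have hysum : ∀ l, ∑ j, (n j l : ℝ) * y j = 0 := by
      intro l
      have h1 : ∑ j, (n j l : ℝ) * c = 0 := by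
        rw [← Finset.sum_mul]
        have h2 : ∑ j, (n j l : ℝ) = (((∑ j, n j) l : ℤ) : ℝ) := by
          rw [Finset.sum_apply]; push_cast; rfl
        rw [h2, hN]
        simp
      simp only [hy, mul_sub]
      rw [Finset.sum_sub_distrib, hGsum l, h1, sub_zero]
    set v : Fin d → ℝ :=
      (∑ m ∈ A, (w m * toricBeta n a m p) • coeZ m) - toricBetaW n a A w p • p with hv
    have hvl : ∀ l, v l
        = (∑ m ∈ A, (w m * toricBeta n a m p) * (m l : ℝ)) - toricBetaW n a A w p * p l := by
      intro l
      simp [hv, Finset.sum_apply, coeZ]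
    have hT : ∀ j, ∑ l, v l * (n j l : ℝ)
        = gval n a A w j p - hR n a j p * toricBetaW n a A w p := by
      intro j
      have expand : ∑ l, v l * (n j l : ℝ)
          = (∑ l, (∑ m ∈ A, (w m * toricBeta n a m p) * (m l : ℝ)) * (n j l : ℝ))
            - ∑ l, (toricBetaW n a A w p * p l) * (n j l : ℝ) := by
        rw [← Finset.sum_sub_distrib]
        refine Finset.sum_congr rfl fun l _ => ?_
        rw [hvl l]; ring
      have hsecond : ∑ l, (toricBetaW n a A w p * p l) * (n j l : ℝ)
          = toricBetaW n a A w p * (hR n a j p - (a j : ℝ)) := by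
        rw [hR, add_sub_cancel_right, Finset.mul_sum]
        exact Finset.sum_congr rfl fun l _ => by ring
      rw [expand, hsecond, gval_expand n a hA p j]
      ring
    have hT' : ∀ j, ∑ l, v l * (n j l : ℝ) = hR n a j p * y j := by
      intro j
      rw [hT j, gval_eq_hR_mul_Gv n a A w j p, hbwp]
      simp only [hy]
      ring
    have hkey : ∑ j, hR n a j p * y j ^ 2 = 0 := by
      have hswap : ∑ j, y j * ∑ l, v l * (n j l : ℝ)
          = ∑ l, v l * ∑ j, (n j l : ℝ) * y j := by
        simp only [Finset.mul_sum]
        rw [Finset.sum_comm]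
        exact Finset.sum_congr rfl fun l _ => Finset.sum_congr rfl fun j _ => by ring
      have hz : ∑ j, y j * ∑ l, v l * (n j l : ℝ) = 0 := by
        rw [hswap]
        simp only [hysum, mul_zero]
        exact Finset.sum_const_zero
      calc ∑ j, hR n a j p * y j ^ 2 = ∑ j, y j * (hR n a j p * y j) :=
            Finset.sum_congr rfl fun j _ => by ring
        _ = ∑ j, y j * ∑ l, v l * (n j l : ℝ) :=
            Finset.sum_congr rfl fun j _ => by rw [hT' j]
        _ = 0 := hz
    have hterm : ∀ j, hR n a j p * y j = 0 := by
      intro j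
      have hz := (Finset.sum_eq_zero_iff_of_nonneg
        (fun j _ => mul_nonneg (hp j) (sq_nonneg _))).mp hkey j (Finset.mem_univ j)
      rcases mul_eq_zero.mp hz with h | h
      · rw [h, zero_mul]
      · rw [sq_eq_zero_iff.mp h, mul_zero]
    have hv0 : v = 0 := by
      by_contra hv0
      obtain ⟨j, hj⟩ := exists_ip_ne n a hcomp hp hv0
      apply hj
      rw [ip, hT' j, hterm j]
    rw [hv] at hv0
    exact (sub_eq_zero.mp hv0).symm
end
end

section
/- Let P ⊆ ℝ^d be a full-dimensional lattice polytope with irredundant facet presentation h_i(p) = ⟨p,n_i⟩ + a_i ≥ 0 (i = 1,…,r) and lattice points m_1,…,m_s enumerating A = P ∩ ℤ^d. Assume Σ_{i=1}^r n_i = 0, and set a_P = Σ_{i=1}^r a_i. Then: (i) Σ_{i=1}^r h_i(m_j) = a_P for every j = 1,…,s (so every column of the (r+1)×s matrix H with rows (h_i(m_j))_j for i = 1,…,r and last row (−a_P,…,−a_P) sums to zero); (ii) a_P > 0; and (iii) no two distinct rows of H are linearly dependent over ℝ. That is, H is a minimal Horn matrix. -/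
open Finset

noncomputable section

/-- Rows of the `(r+1) × s` matrix `H`: the first `r` rows record lattice distances
`h_i(m_j)`, the last row is constantly `-a_P` where `a_P = ∑ i, a_i`. -/
def HornRow {d r : ℕ} (n : Fin r → Fin d → ℤ) (a : Fin r → ℤ) :
    Fin r ⊕ Unit → (Fin d → ℤ) → ℝ :=
  Sum.elim (fun i m => (hZ n a i m : ℝ)) (fun _ _ => -((∑ i, a i : ℤ) : ℝ))

lemma hR_coeZ {d r : ℕ} (n : Fin r → Fin d → ℤ) (a : Fin r → ℤ) (i : Fin r) (m : Fin d → ℤ) :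
    hR n a i (coeZ m) = (hZ n a i m : ℝ) := by
  simp [hR, hZ, coeZ]

lemma convex_zero_set {d : ℕ} (c : Fin d → ℝ) (b : ℝ) :
    Convex ℝ {p : Fin d → ℝ | (∑ l, p l * c l) + b = 0} := by
  intro x hx y hy s t hs ht hst
  simp only [Set.mem_setOf_eq] at *
  have : ∀ l, (s • x + t • y) l = s * x l + t * y l := fun l => rfl
  simp only [this, add_mul, Finset.sum_add_distrib, mul_assoc, ← Finset.mul_sum]
  linear_combination s * hx + t * hy - b * hst

lemma extendP {d r : ℕ} (n : Fin r → Fin d → ℤ) (a : Fin r → ℤ) (A : Finset (Fin d → ℤ))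
    (hP4 : latticePolytope n a = convexHull ℝ (coeZ '' (A : Set (Fin d → ℤ))))
    (c : Fin d → ℝ) (b : ℝ)
    (H : ∀ m ∈ A, (∑ l, coeZ m l * c l) + b = 0) :
    ∀ x ∈ latticePolytope n a, (∑ l, x l * c l) + b = 0 := by
  intro x hx
  rw [hP4] at hx
  exact convexHull_min (by rintro _ ⟨m, hm, rfl⟩; exact H m hm) (convex_zero_set c b) hx

lemma ext_lam {d r : ℕ} (n : Fin r → Fin d → ℤ) (a : Fin r → ℤ) (A : Finset (Fin d → ℤ))
    (hP4 : latticePolytope n a = convexHull ℝ (coeZ '' (A : Set (Fin d → ℤ))))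
    (i i' : Fin r) (lam : ℝ)
    (H : ∀ m ∈ A, hR n a i' (coeZ m) = lam * hR n a i (coeZ m)) :
    ∀ x ∈ latticePolytope n a, hR n a i' x = lam * hR n a i x := by
  have key : ∀ x : Fin d → ℝ,
      (∑ l, x l * ((n i' l : ℝ) - lam * (n i l : ℝ))) + ((a i' : ℝ) - lam * (a i : ℝ))
        = hR n a i' x - lam * hR n a i x := by
    intro x
    have h1 : ∑ l, x l * ((n i' l : ℝ) - lam * (n i l : ℝ))
        = (∑ l, x l * (n i' l : ℝ)) - lam * ∑ l, x l * (n i l : ℝ) := by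
      rw [Finset.mul_sum, ← Finset.sum_sub_distrib]
      exact Finset.sum_congr rfl fun l _ => by ring
    simp only [hR, h1]; ring
  intro x hx
  have := extendP n a A hP4 _ _ (fun m hm => by rw [key]; rw [H m hm]; ring) x hx
  rw [key] at this; linarith

lemma ext_const {d r : ℕ} (n : Fin r → Fin d → ℤ) (a : Fin r → ℤ) (A : Finset (Fin d → ℤ))
    (hP4 : latticePolytope n a = convexHull ℝ (coeZ '' (A : Set (Fin d → ℤ))))
    (i : Fin r) (C : ℝ)
    (H : ∀ m ∈ A, hR n a i (coeZ m) = C) :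
    ∀ x ∈ latticePolytope n a, hR n a i x = C := by
  have key : ∀ x : Fin d → ℝ,
      (∑ l, x l * (n i l : ℝ)) + ((a i : ℝ) - C) = hR n a i x - C := by
    intro x; simp only [hR]; ring
  intro x hx
  have := extendP n a A hP4 _ _ (fun m hm => by rw [key]; rw [H m hm]; ring) x hx
  rw [key] at this; linarith

lemma sum_hZ {d r : ℕ} (n : Fin r → Fin d → ℤ) (a : Fin r → ℤ)
    (hsum : (∑ i, n i) = 0) (m : Fin d → ℤ) :
    ∑ i, hZ n a i m = ∑ i, a i := by
  have hl : ∀ l, (∑ i, n i l) = 0 := by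
    intro l
    have := congrFun hsum l
    simpa using this
  simp only [hZ, Finset.sum_add_distrib]
  rw [Finset.sum_comm]
  have : ∀ l ∈ Finset.univ, (∑ i, m l * n i l) = 0 := by
    intro l _
    rw [← Finset.mul_sum, hl l, mul_zero]
  rw [Finset.sum_congr rfl this]
  simp

lemma sum_hR {d r : ℕ} (n : Fin r → Fin d → ℤ) (a : Fin r → ℤ)
    (hsum : (∑ i, n i) = 0) (x : Fin d → ℝ) :
    ∑ i, hR n a i x = ((∑ i, a i : ℤ) : ℝ) := by
  have hl : ∀ l, (∑ i, (n i l : ℝ)) = 0 := by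
    intro l
    have := congrFun hsum l
    simp only [Finset.sum_apply, Pi.zero_apply] at this
    exact_mod_cast this
  simp only [hR, Finset.sum_add_distrib]
  rw [Finset.sum_comm]
  have : ∀ l ∈ Finset.univ, (∑ i, x l * (n i l : ℝ)) = 0 := by
    intro l _
    rw [← Finset.mul_sum, hl l, mul_zero]
  rw [Finset.sum_congr rfl this]
  push_cast
  simp

/-- If the facet normals sum to zero then the matrix `H` from the paper is a
minimal Horn matrix: (i) every column sums to zero, i.e. `∑ i, h_i(m) = a_P` for all `m ∈ A`;
(ii) `a_P > 0`; (iii) no two distinct rows of `H` are linearly dependent over `ℝ`. -/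
theorem horn_matrix_minimal {d r : ℕ} (hd : 0 < d)
    (n : Fin r → Fin d → ℤ) (a : Fin r → ℤ) (A : Finset (Fin d → ℤ))
    (hP : IsFacetPresentation n a A)
    (hsum : (∑ i, n i) = 0) :
    (∀ m ∈ A, ∑ i, hZ n a i m = ∑ i, a i) ∧
    (0 < ∑ i, a i) ∧
    (∀ k k' : Fin r ⊕ Unit, k ≠ k' →
      ¬ ((∃ lam : ℝ, ∀ m ∈ A, HornRow n a k' m = lam * HornRow n a k m) ∨
         (∃ lam : ℝ, ∀ m ∈ A, HornRow n a k m = lam * HornRow n a k' m))) := by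
  obtain ⟨hcomp, hint, hmemA, hP4, hirr⟩ := hP
  have hNE : Nonempty (Fin d) := ⟨⟨0, hd⟩⟩
  -- r ≥ 2
  have hr2 : 2 ≤ r := by
    by_contra h
    push_neg at h
    have huniv : latticePolytope n a = Set.univ := by
      interval_cases r
      · exact Set.eq_univ_of_forall (fun x i => i.elim0)
      · have hn0 : n 0 = 0 := by simpa [Fin.sum_univ_one] using hsum
        obtain ⟨p, hpP, hp0, -⟩ := hirr 0
        have ha0 : (a 0 : ℝ) = 0 := by
          have : hR n a 0 p = (a 0 : ℝ) := by simp [hR, hn0]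
          rw [this] at hp0; exact hp0
        refine Set.eq_univ_of_forall (fun x i => ?_)
        have hi : i = 0 := Subsingleton.elim i 0
        rw [hi]
        simp [hR, hn0, ha0]
    rw [huniv, isCompact_univ_iff] at hcomp
    exact (not_compactSpace_iff.mpr inferInstance) hcomp
  have h0r : 0 < r := by omega
  have h1r : 1 < r := by omega
  set i0 : Fin r := ⟨0, h0r⟩ with hi0
  set i1 : Fin r := ⟨1, h1r⟩ with hi1
  have h01 : i1 ≠ i0 := Fin.ne_of_val_ne (by norm_num)
  -- a_P > 0
  have haP : 0 < ∑ i, a i := by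
    obtain ⟨p0, hp0P, hp00, hp0pos⟩ := hirr i0
    have hs : ((∑ i, a i : ℤ) : ℝ) = ∑ i, hR n a i p0 := (sum_hR n a hsum p0).symm
    have pos : 0 < ∑ i, hR n a i p0 :=
      Finset.sum_pos' (fun i _ => hp0P i) ⟨i1, Finset.mem_univ _, hp0pos i1 h01⟩
    exact_mod_cast hs ▸ pos
  have haPR : (0:ℝ) < ((∑ i, a i : ℤ) : ℝ) := by exact_mod_cast haP
  -- A nonempty
  have hAne : A.Nonempty := by
    obtain ⟨p0, hp0⟩ := hint
    have hp0P : p0 ∈ latticePolytope n a := interior_subset hp0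
    rw [hP4] at hp0P
    by_contra h
    rw [Finset.not_nonempty_iff_eq_empty] at h
    rw [h] at hp0P
    simp at hp0P
  refine ⟨fun m _ => sum_hZ n a hsum m, haP, ?_⟩
  -- helper impossibility facts
  have habs1 : ∀ (i i' : Fin r), i ≠ i' → ∀ lam : ℝ,
      ¬ (∀ m ∈ A, (hZ n a i' m : ℝ) = lam * (hZ n a i m : ℝ)) := by
    intro i i' hne lam H
    have Hx := ext_lam n a A hP4 i i' lam
      (fun m hm => by rw [hR_coeZ, hR_coeZ]; exact H m hm)
    obtain ⟨p, hpP, hp0, hppos⟩ := hirr i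
    have h1 := Hx p hpP
    rw [hp0, mul_zero] at h1
    exact absurd h1 (ne_of_gt (hppos i' hne.symm))
  have habs2 : ∀ (i : Fin r) (lam : ℝ),
      ¬ (∀ m ∈ A, -((∑ j, a j : ℤ) : ℝ) = lam * (hZ n a i m : ℝ)) := by
    intro i lam H
    by_cases hl : lam = 0
    · obtain ⟨m, hm⟩ := hAne
      have h1 := H m hm
      rw [hl, zero_mul] at h1
      linarith
    · have Hc := ext_const n a A hP4 i (-((∑ j, a j : ℤ) : ℝ) / lam)
        (fun m hm => by
          rw [hR_coeZ, eq_div_iff hl]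
          linear_combination -(H m hm))
      obtain ⟨p, hpP, hp0, -⟩ := hirr i
      have h1 := Hc p hpP
      rw [hp0] at h1
      have h2 : -((∑ j, a j : ℤ) : ℝ) = 0 := by
        field_simp at h1
        push_cast
        linarith [h1]
      linarith
  have habs3 : ∀ (i : Fin r) (lam : ℝ),
      ¬ (∀ m ∈ A, (hZ n a i m : ℝ) = lam * -((∑ j, a j : ℤ) : ℝ)) := by
    intro i lam H
    have Hc := ext_const n a A hP4 i (lam * -((∑ j, a j : ℤ) : ℝ))
      (fun m hm => by rw [hR_coeZ]; exact H m hm)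
    obtain ⟨p, hpP, hp0, -⟩ := hirr i
    have h0 : lam * -((∑ j, a j : ℤ) : ℝ) = 0 := by rw [← Hc p hpP, hp0]
    have hj : ∃ j : Fin r, j ≠ i := by
      by_cases hii : i = i0
      · exact ⟨i1, by rw [hii]; exact h01⟩
      · exact ⟨i0, fun h => hii h.symm⟩
    obtain ⟨j, hji⟩ := hj
    obtain ⟨q, hqP, hq0, hqpos⟩ := hirr j
    have h1 := Hc q hqP
    rw [h0] at h1
    exact absurd h1 (ne_of_gt (hqpos i (fun h => hji h.symm)))
  -- case analysis on rows
  rintro (i | u) (i' | u') hkk' hcon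
  · have hne : i ≠ i' := fun h => hkk' (congrArg Sum.inl h)
    simp only [HornRow, Sum.elim_inl] at hcon
    rcases hcon with ⟨lam, H⟩ | ⟨lam, H⟩
    · exact habs1 i i' hne lam H
    · exact habs1 i' i hne.symm lam H
  · simp only [HornRow, Sum.elim_inl, Sum.elim_inr] at hcon
    rcases hcon with ⟨lam, H⟩ | ⟨lam, H⟩
    · exact habs2 i lam H
    · exact habs3 i lam H
  · simp only [HornRow, Sum.elim_inl, Sum.elim_inr] at hcon
    rcases hcon with ⟨lam, H⟩ | ⟨lam, H⟩
    · exact habs3 i' lam H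
    · exact habs2 i' lam H
  · exact hkk' (by cases u; cases u'; rfl)
end
end

section
/- Let P ⊆ ℝ^d be a full-dimensional lattice polytope with irredundant facet presentation h_i(p) = ⟨p,n_i⟩ + a_i ≥ 0 (i = 1,…,r), lattice points A = P ∩ ℤ^d, and positive weights w = (w_m)_{m∈A}. In the polynomial ring ℝ[u_m : m ∈ A], set u_+ = Σ_{m∈A} u_m, ℓ_i = Σ_{m∈A} h_i(m)·u_m for i = 1,…,r, h_P(m) = Σ_{i=1}^r h_i(m), h = max_{m∈A} h_P(m), and β̃ = Σ_{m∈A} w_m·u_+^{h−h_P(m)}·∏_{i=1}^r ℓ_i^{h_i(m)}. Then for every i ∈ {1,…,r}, the linear form ℓ_i does not divide the polynomial β̃. -/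
open Finset

noncomputable section

/-- `h_P(m) = ∑_i h_i(m)`, the total lattice distance of a lattice point to all facets. -/
def hPnat {d r : ℕ} (n : Fin r → Fin d → ℤ) (a : Fin r → ℤ) (m : Fin d → ℤ) : ℕ :=
  ∑ i, (hZ n a i m).toNat

/-- The linear form `ℓ_i = ∑_{m ∈ A} h_i(m)·u_m` in the polynomial ring `ℝ[u_m : m ∈ A]`. -/
def ellPoly {d r : ℕ} (n : Fin r → Fin d → ℤ) (a : Fin r → ℤ) (A : Finset (Fin d → ℤ))
    (i : Fin r) : MvPolynomial {x // x ∈ A} ℝ :=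
  ∑ m : {x // x ∈ A}, MvPolynomial.C ((hZ n a i m.1 : ℤ) : ℝ) * MvPolynomial.X m

/-- The linear form `u_+ = ∑_{m ∈ A} u_m`. -/
def uPlusPoly {d : ℕ} (A : Finset (Fin d → ℤ)) : MvPolynomial {x // x ∈ A} ℝ :=
  ∑ m : {x // x ∈ A}, MvPolynomial.X m

/-- The polynomial `β̃ = ∑_{m ∈ A} w_m · u_+^{h - h_P(m)} · ∏_i ℓ_i^{h_i(m)}`, where
`h = max_{m ∈ A} h_P(m)`. -/
def betaTilde {d r : ℕ} (n : Fin r → Fin d → ℤ) (a : Fin r → ℤ) (A : Finset (Fin d → ℤ))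
    (w : (Fin d → ℤ) → ℝ) : MvPolynomial {x // x ∈ A} ℝ :=
  ∑ m : {x // x ∈ A}, MvPolynomial.C (w m.1) *
    uPlusPoly A ^ (A.sup (hPnat n a) - hPnat n a m.1) *
    ∏ i, ellPoly n a A i ^ (hZ n a i m.1).toNat

lemma hZ_nonneg {d r : ℕ} {n : Fin r → Fin d → ℤ} {a : Fin r → ℤ} {A : Finset (Fin d → ℤ)}
    (hP : IsFacetPresentation n a A) {m : Fin d → ℤ} (hm : m ∈ A) (k : Fin r) :
    0 ≤ hZ n a k m := by
  have h := ((hP.2.2.1 m).1 hm) k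
  rw [hR_coeZ] at h
  exact_mod_cast h

/-- Every facet contains a lattice point of `A`. -/
lemma exists_lattice_point_on_facet {d r : ℕ} {n : Fin r → Fin d → ℤ} {a : Fin r → ℤ}
    {A : Finset (Fin d → ℤ)} (hP : IsFacetPresentation n a A) (i : Fin r) :
    ∃ m₀ ∈ A, hZ n a i m₀ = 0 := by
  obtain ⟨p, hpP, hpi, -⟩ := hP.2.2.2.2 i
  have hhull := hP.2.2.2.1
  set T : Finset (Fin d → ℝ) := A.image coeZ with hT
  have hTc : coeZ '' (A : Set (Fin d → ℤ)) = (T : Set (Fin d → ℝ)) := by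
    simp [hT, Finset.coe_image]
  have hpHull : p ∈ convexHull ℝ (T : Set (Fin d → ℝ)) := by
    rw [← hTc, ← hhull]; exact hpP
  obtain ⟨μ, hμ0, hμ1, hμc⟩ := Finset.mem_convexHull.1 hpHull
  rw [Finset.centerMass_eq_of_sum_1 _ _ hμ1] at hμc
  -- each point of T lies in P, hence has nonnegative hR
  have hTP : ∀ y ∈ T, 0 ≤ hR n a i y := by
    intro y hy
    have : y ∈ latticePolytope n a := by
      rw [hhull]
      exact subset_convexHull ℝ _ (by rw [hTc]; exact_mod_cast hy)
    exact this i
  -- hR is affine on convex combinations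
  have key : ∑ y ∈ T, μ y * hR n a i y = 0 := by
    have : hR n a i p = ∑ y ∈ T, μ y * hR n a i y := by
      simp only [hR]
      have hpl : ∀ l, p l = ∑ y ∈ T, μ y * y l := by
        intro l
        rw [← hμc]
        simp [Finset.sum_apply]
      have hrhs : ∑ y ∈ T, μ y * ((∑ l, y l * (n i l : ℝ)) + (a i : ℝ)) =
          (∑ y ∈ T, μ y * ∑ l, y l * (n i l : ℝ)) + (∑ y ∈ T, μ y) * (a i : ℝ) := by
        rw [Finset.sum_mul, ← Finset.sum_add_distrib]
        apply Finset.sum_congr rfl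
        intro y _
        ring
      rw [hrhs, hμ1, one_mul]
      congr 1
      simp_rw [hpl, Finset.sum_mul, Finset.mul_sum]
      rw [Finset.sum_comm]
      apply Finset.sum_congr rfl
      intro y _
      apply Finset.sum_congr rfl
      intro l _
      ring
    rw [← this, hpi]
  -- all terms are nonneg, sum is 0, and weights sum to 1, so some weight is positive
  have hμpos : ∃ y ∈ T, 0 < μ y := by
    by_contra h
    push_neg at h
    have : ∑ y ∈ T, μ y = 0 := Finset.sum_eq_zero fun y hy =>
      le_antisymm (h y hy) (hμ0 y hy)
    rw [hμ1] at this; norm_num at this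
  obtain ⟨y, hyT, hμy⟩ := hμpos
  have hterm : ∀ z ∈ T, 0 ≤ μ z * hR n a i z := fun z hz =>
    mul_nonneg (hμ0 z hz) (hTP z hz)
  have hy0 : μ y * hR n a i y = 0 :=
    (Finset.sum_eq_zero_iff_of_nonneg hterm).1 key y hyT
  have hRy : hR n a i y = 0 := by
    rcases mul_eq_zero.1 hy0 with h | h
    · exact absurd h (ne_of_gt hμy)
    · exact h
  obtain ⟨m₀, hm₀A, hm₀⟩ := Finset.mem_image.1 hyT
  refine ⟨m₀, hm₀A, ?_⟩
  have : (hZ n a i m₀ : ℝ) = 0 := by rw [← hR_coeZ, hm₀, hRy]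
  exact_mod_cast this

/-- None of the linear forms `ℓ_i` divides the polynomial `β̃`. -/
theorem ell_not_dvd_betaTilde {d r : ℕ} (hd : 0 < d)
    (n : Fin r → Fin d → ℤ) (a : Fin r → ℤ) (A : Finset (Fin d → ℤ))
    (hP : IsFacetPresentation n a A)
    (w : (Fin d → ℤ) → ℝ) (hw : ∀ m ∈ A, 0 < w m) :
    ∀ i : Fin r, ¬ ellPoly n a A i ∣ betaTilde n a A w := by
  intro i hdvd
  obtain ⟨m₀, hm₀A, hm₀⟩ := exists_lattice_point_on_facet hP i
  -- evaluation point: 1 on lattice points of facet i, 0 elsewhere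
  set x : {y // y ∈ A} → ℝ := fun m => if hZ n a i m.1 = 0 then 1 else 0 with hx
  have hx_nonneg : ∀ m : {y // y ∈ A}, 0 ≤ x m := by
    intro m; simp only [hx]; split <;> norm_num
  have hxm₀ : x ⟨m₀, hm₀A⟩ = 1 := by simp [hx, hm₀]
  -- evaluation of the linear forms
  have hEll : ∀ k, MvPolynomial.eval x (ellPoly n a A k) =
      ∑ m : {y // y ∈ A}, (hZ n a k m.1 : ℝ) * x m := by
    intro k; simp [ellPoly]
  have hU : MvPolynomial.eval x (uPlusPoly A) = ∑ m : {y // y ∈ A}, x m := by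
    simp [uPlusPoly]
  -- ℓ_i evaluates to 0
  have hElli : MvPolynomial.eval x (ellPoly n a A i) = 0 := by
    rw [hEll]
    apply Finset.sum_eq_zero
    intro m _
    by_cases h : hZ n a i m.1 = 0
    · simp [h]
    · simp [hx, h]
  -- the other evaluations are nonnegative / positive
  have hEll_nonneg : ∀ k, 0 ≤ MvPolynomial.eval x (ellPoly n a A k) := by
    intro k
    rw [hEll]
    apply Finset.sum_nonneg
    intro m _
    exact mul_nonneg (by exact_mod_cast hZ_nonneg hP m.2 k) (hx_nonneg m)
  have hEll_ge : ∀ k, (hZ n a k m₀ : ℝ) ≤ MvPolynomial.eval x (ellPoly n a A k) := by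
    intro k
    rw [hEll]
    have := Finset.single_le_sum (f := fun m : {y // y ∈ A} => (hZ n a k m.1 : ℝ) * x m)
      (fun m _ => mul_nonneg (by exact_mod_cast hZ_nonneg hP m.2 k) (hx_nonneg m))
      (Finset.mem_univ ⟨m₀, hm₀A⟩)
    simpa [hxm₀] using this
  have hU_pos : 0 < MvPolynomial.eval x (uPlusPoly A) := by
    rw [hU]
    have := Finset.single_le_sum (f := x) (fun m _ => hx_nonneg m)
      (Finset.mem_univ ⟨m₀, hm₀A⟩)
    rw [hxm₀] at this
    linarith
  -- evaluation of β̃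
  have hBeta : MvPolynomial.eval x (betaTilde n a A w) =
      ∑ m : {y // y ∈ A}, w m.1 * MvPolynomial.eval x (uPlusPoly A) ^
        (A.sup (hPnat n a) - hPnat n a m.1) *
        ∏ k, MvPolynomial.eval x (ellPoly n a A k) ^ (hZ n a k m.1).toNat := by
    simp [betaTilde]
  -- β̃ evaluates to something positive
  have hBeta_pos : 0 < MvPolynomial.eval x (betaTilde n a A w) := by
    rw [hBeta]
    apply Finset.sum_pos'
    · intro m _
      apply mul_nonneg (mul_nonneg (le_of_lt (hw m.1 m.2)) (pow_nonneg (le_of_lt hU_pos) _))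
      exact Finset.prod_nonneg fun k _ => pow_nonneg (hEll_nonneg k) _
    · refine ⟨⟨m₀, hm₀A⟩, Finset.mem_univ _, ?_⟩
      apply mul_pos (mul_pos (hw m₀ hm₀A) (pow_pos hU_pos _))
      apply Finset.prod_pos
      intro k _
      rcases (hZ_nonneg hP hm₀A k).lt_or_eq with h | h
      · have : (0 : ℝ) < hZ n a k m₀ := by exact_mod_cast h
        exact pow_pos (lt_of_lt_of_le this (hEll_ge k)) _
      · rw [← h]
        norm_num
  -- but divisibility forces it to be 0
  obtain ⟨c, hc⟩ := hdvd
  have : MvPolynomial.eval x (betaTilde n a A w) = 0 := by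
    rw [hc, map_mul, hElli, zero_mul]
  linarith
end
end

section
/- Let P ⊆ ℝ^d be a full-dimensional lattice polytope with irredundant facet presentation h_i(p) = ⟨p,n_i⟩ + a_i ≥ 0 (i = 1,…,r), lattice points A = P ∩ ℤ^d, and positive weights w = (w_m)_{m∈A}. Then β_w(p) > 0 for every p ∈ P; in fact, for every p ∈ P there exists m ∈ A with β_m(p) > 0. -/
open Finset

noncomputable section

/-- For positive weights, `β_w(p) > 0` for every `p ∈ P`; indeed for every
`p ∈ P` some blending polynomial `β_m(p)` is positive. -/
theorem betaW_pos_on_polytope {d r : ℕ} (hd : 0 < d)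
    (n : Fin r → Fin d → ℤ) (a : Fin r → ℤ) (A : Finset (Fin d → ℤ))
    (hP : IsFacetPresentation n a A)
    (w : (Fin d → ℤ) → ℝ) (hw : ∀ m ∈ A, 0 < w m) :
    ∀ p ∈ latticePolytope n a,
      0 < toricBetaW n a A w p ∧ ∃ m ∈ A, 0 < toricBeta n a m p := by
  obtain ⟨-, -, hAmem, hHull, -⟩ := hP
  intro p hp
  -- p is a convex combination of lattice points
  have hpc : p ∈ convexHull ℝ (coeZ '' (A : Set (Fin d → ℤ))) := hHull ▸ hp
  rw [_root_.convexHull_eq] at hpc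
  obtain ⟨ι, t, c, z, hc0, hc1, hzA, hcm⟩ := hpc
  have hps : p = ∑ j ∈ t, c j • z j := by
    rw [← hcm, Finset.centerMass_eq_of_sum_1 _ _ hc1]
  -- linearity of hR over the convex combination
  have hlin : ∀ i, hR n a i p = ∑ j ∈ t, c j * hR n a i (z j) := by
    intro i
    have h1 : ∑ l, p l * (n i l : ℝ) = ∑ j ∈ t, c j * ∑ l, z j l * (n i l : ℝ) := by
      calc ∑ l, p l * (n i l : ℝ)
          = ∑ l, ∑ j ∈ t, c j * z j l * (n i l : ℝ) := by
            refine Finset.sum_congr rfl fun l _ => ?_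
            rw [hps]
            simp [Finset.sum_apply, Finset.sum_mul]
        _ = ∑ j ∈ t, ∑ l, c j * z j l * (n i l : ℝ) := Finset.sum_comm
        _ = ∑ j ∈ t, c j * ∑ l, z j l * (n i l : ℝ) := by
            refine Finset.sum_congr rfl fun j _ => ?_
            rw [Finset.mul_sum]
            exact Finset.sum_congr rfl fun l _ => by ring
    simp only [hR, h1, mul_add, Finset.sum_add_distrib]
    congr 1
    rw [← Finset.sum_mul, hc1, one_mul]
  -- each z j is in the polytope
  have hzP : ∀ j ∈ t, ∀ i, 0 ≤ hR n a i (z j) := by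
    intro j hj i
    obtain ⟨m, hm, hzm⟩ := hzA j hj
    have := (hAmem m).mp hm
    rw [← hzm]
    exact this i
  -- pick a point with positive coefficient
  have : (∑ j ∈ t, (0 : ℝ)) < ∑ j ∈ t, c j := by rw [hc1]; simp
  obtain ⟨j, hj, hcj⟩ := Finset.exists_lt_of_sum_lt this
  obtain ⟨m, hmA, hzm⟩ := hzA j hj
  -- for every facet vanishing at p, it vanishes at m
  have hkey : ∀ i, hR n a i p = 0 → hZ n a i m = 0 := by
    intro i hi
    have hnn : ∀ k ∈ t, 0 ≤ c k * hR n a i (z k) := fun k hk =>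
      mul_nonneg (hc0 k hk) (hzP k hk i)
    have hsum : ∑ k ∈ t, c k * hR n a i (z k) = 0 := by rw [← hlin i, hi]
    have hterm : c j * hR n a i (z j) = 0 :=
      (Finset.sum_eq_zero_iff_of_nonneg hnn).mp hsum j hj
    have hzj : hR n a i (z j) = 0 := by
      rcases mul_eq_zero.mp hterm with h | h
      · exact absurd h (ne_of_gt hcj)
      · exact h
    have : ((hZ n a i m : ℤ) : ℝ) = 0 := by
      rw [← hzj, ← hzm]
      simp [hR, hZ, coeZ]
    exact_mod_cast this
  -- β_m(p) > 0
  have hbeta : 0 < toricBeta n a m p := by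
    unfold toricBeta
    apply Finset.prod_pos
    intro i _
    rcases lt_or_eq_of_le (hp i) with h | h
    · exact pow_pos h _
    · rw [hkey i h.symm]
      simp
  refine ⟨?_, m, hmA, hbeta⟩
  unfold toricBetaW
  apply Finset.sum_pos'
  · intro m' hm'
    apply mul_nonneg (le_of_lt (hw m' hm'))
    exact Finset.prod_nonneg fun i _ => pow_nonneg (hp i) _
  · exact ⟨m, hmA, mul_pos (hw m hmA) hbeta⟩
end
end

section
/- Let H be an n×s integer matrix and H' an n'×s integer matrix, both Horn matrices (all column sums zero), both minimal (no zero row, and no two distinct rows linearly dependent over ℚ), and let d_1,…,d_s and d'_1,…,d'_s be nonzero complex constants. If the Horn parametrizations coincide, i.e. for every j = 1,…,s the equality d_j·∏_{k=1}^n ℓ_k^{b_{kj}} = d'_j·∏_{k=1}^{n'} (ℓ'_k)^{b'_{kj}} holds in the field ℂ(u_1,…,u_s) of rational functions (where ℓ_k = Σ_j b_{kj} u_j and ℓ'_k = Σ_j b'_{kj} u_j), then n = n', d_j = d'_j for all j, and there is a bijection σ : {1,…,n} → {1,…,n'} such that b'_{σ(k)j} = b_{kj} for all k, j. In other words, a Horn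 parametrization is given by a minimal Horn matrix that is unique up to permutation of its rows. -/
open Finset

noncomputable section

/-- The field `ℂ(u_1,…,u_s)` of rational functions in `s` variables. -/
abbrev RatFunField (s : ℕ) := FractionRing (MvPolynomial (Fin s) ℂ)

/-- The linear form `ℓ = ∑_j v_j u_j` viewed in `ℂ(u_1,…,u_s)`. -/
def linForm {s : ℕ} (v : Fin s → ℤ) : RatFunField s :=
  algebraMap (MvPolynomial (Fin s) ℂ) (RatFunField s)
    (∑ j, MvPolynomial.C ((v j : ℂ)) * MvPolynomial.X j)

/-- The `j`-th component `G_j = d_j ∏_k ℓ_k^{b_{kj}}` of the Horn parametrization of the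
Horn matrix `B` with constants `dd`. -/
def hornComponent {n s : ℕ} (B : Matrix (Fin n) (Fin s) ℤ) (dd : Fin s → ℂ) (j : Fin s) :
    RatFunField s :=
  algebraMap (MvPolynomial (Fin s) ℂ) (RatFunField s) (MvPolynomial.C (dd j)) *
    ∏ k, linForm (B k) ^ (B k j)

/-- `B` is a Horn matrix: every column sums to zero. -/
def IsHornMatrix {n s : ℕ} (B : Matrix (Fin n) (Fin s) ℤ) : Prop :=
  ∀ j, ∑ k, B k j = 0

/-- `B` is minimal: no zero row, and no two distinct rows are linearly dependent (one a
rational multiple of the other). -/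
def IsMinimalHorn {n s : ℕ} (B : Matrix (Fin n) (Fin s) ℤ) : Prop :=
  (∀ k, B k ≠ 0) ∧
  ∀ k k' : Fin n, k ≠ k' →
    ¬ ((∃ q : ℚ, ∀ j, (B k' j : ℚ) = q * (B k j : ℚ)) ∨
       (∃ q : ℚ, ∀ j, (B k j : ℚ) = q * (B k' j : ℚ)))

/-! Each `ℓ_k` is a prime of the UFD `ℂ[u_1,…,u_s]`, and distinct rows of a minimal matrix give
non-associated primes. For a prime `p`, clearing denominators in `G_j = G'_j` and taking
`emultiplicity p` shows that the exponents of the `ℓ_k` associated to `p` have the same sum on both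
sides. Taking `p = ℓ_k` shows that every row of one matrix is a row of the other; minimality turns
this matching into a bijection of rows, and cancelling the common product gives `d_j = d'_j`. -/

section PrimeExponents

variable {α : Type*} [CommMonoidWithZero α] [IsCancelMulZero α] {ι : Type*} [Fintype ι]

open Classical in
theorem emultiplicity_pow_of_prime {p q : α} (hp : Prime p) (hq : Prime q) (m : ℕ) :
    emultiplicity p (q ^ m) = if Associated p q then (m : ℕ∞) else 0 := by
  split_ifs with h
  · rw [← emultiplicity_eq_of_associated_right (h.pow_pow (n := m)),
      emultiplicity_pow_self_of_prime hp]
  · rw [emultiplicity_pow hp,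
      emultiplicity_eq_zero.mpr fun hdvd => h (hp.associated_of_dvd hq hdvd), mul_zero]

open Classical in
theorem emultiplicity_unit_mul_prod_pow {p u : α} (hp : Prime p) (hu : IsUnit u)
    {L : ι → α} (hL : ∀ i, Prime (L i)) (a : ι → ℕ) :
    emultiplicity p (u * ∏ i, L i ^ a i) = ↑(∑ i ∈ univ with Associated p (L i), a i) := by
  rw [emultiplicity_mul hp, emultiplicity_of_isUnit_right hp.not_isUnit hu, zero_add,
    Finset.emultiplicity_prod hp, sum_filter, Nat.cast_sum]
  exact sum_congr rfl fun i _ => by rw [emultiplicity_pow_of_prime hp (hL i), Nat.cast_ite,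
    Nat.cast_zero]

end PrimeExponents

section FractionField

variable {R K : Type*} [CommRing R] [IsDomain R] [Field K] [Algebra R K] [IsFractionRing R K]
  {ι : Type*} [Fintype ι]

open Classical in
theorem sum_exponents_associated_eq_zero {L : ι → R} (hL : ∀ i, Prime (L i)) {u v : R}
    (hu : IsUnit u) (hv : IsUnit v) {e : ι → ℤ}
    (h : algebraMap R K u * ∏ i, algebraMap R K (L i) ^ e i = algebraMap R K v)
    {p : R} (hp : Prime p) :
    ∑ i ∈ univ with Associated p (L i), e i = 0 := by
  have hinj := IsFractionRing.injective R K
  have hsplit : ∀ i, algebraMap R K (L i) ^ e i =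
      algebraMap R K (L i ^ (e i).toNat) / algebraMap R K (L i ^ (-e i).toNat) := by
    intro i
    have hL0 : algebraMap R K (L i) ≠ 0 := (map_ne_zero_iff _ hinj).mpr (hL i).ne_zero
    rw [map_pow, map_pow, ← zpow_natCast, ← zpow_natCast, ← zpow_sub₀ hL0]
    congr 1
    omega
  have hcleared : u * ∏ i, L i ^ (e i).toNat = v * ∏ i, L i ^ (-e i).toNat := by
    have hden : algebraMap R K (∏ i, L i ^ (-e i).toNat) ≠ 0 :=
      (map_ne_zero_iff _ hinj).mpr <| prod_ne_zero_iff.mpr fun i _ => pow_ne_zero _ (hL i).ne_zero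
    simp only [hsplit, prod_div_distrib, ← map_prod] at h
    apply hinj
    rw [map_mul, map_mul, ← h]
    field_simp
  have hcount := congrArg (emultiplicity p) hcleared
  rw [emultiplicity_unit_mul_prod_pow hp hu hL, emultiplicity_unit_mul_prod_pow hp hv hL,
    Nat.cast_inj] at hcount
  calc ∑ i ∈ univ with Associated p (L i), e i
      = ∑ i ∈ univ with Associated p (L i), (((e i).toNat : ℤ) - ((-e i).toNat : ℤ)) :=
        sum_congr rfl fun i _ => by omega
    _ = 0 := by rw [sum_sub_distrib, ← Nat.cast_sum, ← Nat.cast_sum, hcount, sub_self]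

open Classical in
theorem sum_exponents_associated_eq {ι' : Type*} [Fintype ι'] {L : ι → R} {L' : ι' → R}
    (hL : ∀ i, Prime (L i)) (hL' : ∀ i, Prime (L' i)) {u v : R} (hu : IsUnit u) (hv : IsUnit v)
    {e : ι → ℤ} {e' : ι' → ℤ}
    (h : algebraMap R K u * ∏ i, algebraMap R K (L i) ^ e i =
      algebraMap R K v * ∏ i, algebraMap R K (L' i) ^ e' i)
    {p : R} (hp : Prime p) :
    ∑ i ∈ univ with Associated p (L i), e i = ∑ i ∈ univ with Associated p (L' i), e' i := by
  have hP' : ∏ i, algebraMap R K (L' i) ^ e' i ≠ 0 :=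
    prod_ne_zero_iff.mpr fun i _ => zpow_ne_zero _ <|
      (map_ne_zero_iff _ (IsFractionRing.injective R K)).mpr (hL' i).ne_zero
  have hcombined : algebraMap R K u *
      ∏ i, algebraMap R K (Sum.elim L L' i) ^ Sum.elim e (-e') i = algebraMap R K v := by
    simp only [Fintype.prod_sum_type, Sum.elim_inl, Sum.elim_inr, Pi.neg_apply, zpow_neg,
      prod_inv_distrib]
    rw [← mul_assoc, h, mul_assoc, mul_inv_cancel₀ hP', mul_one]
  have hsum := sum_exponents_associated_eq_zero (Sum.rec hL hL') hu hv hcombined hp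
  simp only [sum_filter, Fintype.sum_sum_type, Sum.elim_inl, Sum.elim_inr] at hsum ⊢
  rw [← sub_eq_zero, sub_eq_add_neg, ← sum_neg_distrib]
  -- the summands differ only in their `Decidable` instances
  convert hsum using 3 with i
  · rfl
  · rw [neg_ite, neg_zero]
    rfl

end FractionField

open MvPolynomial

def linPoly {s : ℕ} (v : Fin s → ℤ) : MvPolynomial (Fin s) ℂ :=
  ∑ j, C (v j : ℂ) * X j

section LinPoly

variable {s : ℕ}

theorem coeff_single_linPoly (v : Fin s → ℤ) (j : Fin s) :
    coeff (Finsupp.single j 1) (linPoly v) = v j := by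
  classical
  simp only [linPoly, coeff_sum, coeff_C_mul, coeff_X, Finsupp.single_left_inj one_ne_zero]
  simp

theorem totalDegree_linPoly {v : Fin s → ℤ} (hv : v ≠ 0) : (linPoly v).totalDegree = 1 := by
  apply le_antisymm
  · refine (totalDegree_finsetSum_le fun j _ => ?_)
    exact (totalDegree_mul _ _).trans (by rw [totalDegree_C, totalDegree_X])
  · obtain ⟨j, hj⟩ := Function.ne_iff.mp hv
    have hcoeff : coeff (Finsupp.single j 1) (linPoly v) ≠ 0 := by
      simpa [coeff_single_linPoly] using hj
    simpa using le_totalDegree (mem_support_iff.mpr hcoeff)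

theorem prime_linPoly {v : Fin s → ℤ} (hv : v ≠ 0) : Prime (linPoly v) := by
  refine (irreducible_of_totalDegree_eq_one (totalDegree_linPoly hv) fun x hx => ?_).prime
  obtain ⟨j, hj⟩ := Function.ne_iff.mp hv
  refine IsUnit.mk0 x fun hx0 => hj ?_
  simpa [hx0, coeff_single_linPoly] using hx (Finsupp.single j 1)

theorem exists_rat_of_associated_linPoly {v w : Fin s → ℤ} (hv : v ≠ 0)
    (h : Associated (linPoly v) (linPoly w)) : ∃ q : ℚ, ∀ j, (w j : ℚ) = q * v j := by
  obtain ⟨u, hu⟩ := h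
  obtain ⟨r, -, hr⟩ := isUnit_iff_eq_C_of_isReduced.mp u.isUnit
  have hcoeff : ∀ j, (w j : ℂ) = r * v j := fun j => by
    rw [← coeff_single_linPoly, ← hu, hr, mul_comm, coeff_C_mul, coeff_single_linPoly]
  obtain ⟨j0, hj0⟩ := Function.ne_iff.mp hv
  have hj0 : (v j0 : ℂ) ≠ 0 := by exact_mod_cast hj0
  have hr : r = ((w j0 / v j0 : ℚ) : ℂ) := by
    push_cast
    rw [hcoeff j0]
    field_simp
  refine ⟨w j0 / v j0, fun j => Rat.cast_injective (α := ℂ) ?_⟩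
  push_cast
  rw [hcoeff j, hr]
  push_cast
  ring

end LinPoly

namespace IsMinimalHorn

variable {n s : ℕ} {B : Matrix (Fin n) (Fin s) ℤ}

theorem injective (hB : IsMinimalHorn B) : Function.Injective B := by
  intro k k' h
  by_contra hne
  exact hB.2 k k' hne (Or.inl ⟨1, fun j => by rw [h, one_mul]⟩)

theorem eq_of_associated (hB : IsMinimalHorn B) {k k' : Fin n}
    (h : Associated (linPoly (B k)) (linPoly (B k'))) : k = k' := by
  by_contra hne
  exact hB.2 k k' hne (Or.inl (exists_rat_of_associated_linPoly (hB.1 k) h))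

open Classical in
theorem filter_associated_eq_singleton (hB : IsMinimalHorn B) {p : MvPolynomial (Fin s) ℂ}
    {k : Fin n} (hk : Associated p (linPoly (B k))) :
    ({k' | Associated p (linPoly (B k'))} : Finset (Fin n)) = {k} := by
  ext k'
  simp only [mem_filter, mem_univ, true_and, mem_singleton]
  exact ⟨fun hk' => hB.eq_of_associated (hk'.symm.trans hk), fun h => h ▸ hk⟩

end IsMinimalHorn

section HornParametrization

variable {n n' s : ℕ} {B : Matrix (Fin n) (Fin s) ℤ} {B' : Matrix (Fin n') (Fin s) ℤ}
  {dd dd' : Fin s → ℂ}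

theorem linForm_ne_zero {v : Fin s → ℤ} (hv : v ≠ 0) : linForm v ≠ 0 :=
  (map_ne_zero_iff _ (IsFractionRing.injective _ _)).mpr (prime_linPoly hv).ne_zero

open Classical in
theorem sum_associated_eq_of_hornComponent_eq (hB : ∀ k, B k ≠ 0) (hB' : ∀ k, B' k ≠ 0)
    {j : Fin s} (hd : dd j ≠ 0) (hd' : dd' j ≠ 0)
    (h : hornComponent B dd j = hornComponent B' dd' j)
    {p : MvPolynomial (Fin s) ℂ} (hp : Prime p) :
    ∑ k ∈ univ with Associated p (linPoly (B k)), B k j =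
      ∑ k ∈ univ with Associated p (linPoly (B' k)), B' k j :=
  -- `linForm v` unfolds to `algebraMap _ _ (linPoly v)`, so `h` applies as it stands
  sum_exponents_associated_eq (fun k => prime_linPoly (hB k)) (fun k => prime_linPoly (hB' k))
    (hd.isUnit.map C) (hd'.isUnit.map C) h hp

theorem exists_row_eq_of_hornComponent_eq (hB : IsMinimalHorn B) (hB' : IsMinimalHorn B')
    (hd : ∀ j, dd j ≠ 0) (hd' : ∀ j, dd' j ≠ 0)
    (h : ∀ j, hornComponent B dd j = hornComponent B' dd' j) (k : Fin n) :
    ∃ k', B' k' = B k := by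
  classical
  have hsum j := sum_associated_eq_of_hornComponent_eq hB.1 hB'.1 (hd j) (hd' j) (h j)
    (prime_linPoly (hB.1 k))
  simp only [hB.filter_associated_eq_singleton (Associated.refl _), sum_singleton] at hsum
  by_cases hmatch : ∃ k', Associated (linPoly (B k)) (linPoly (B' k'))
  · obtain ⟨k', hk'⟩ := hmatch
    simp only [hB'.filter_associated_eq_singleton hk', sum_singleton] at hsum
    exact ⟨k', funext fun j => (hsum j).symm⟩
  · simp only [filter_false_of_mem fun k' _ hk' => hmatch ⟨k', hk'⟩, sum_empty] at hsum
    exact absurd (funext hsum) (hB.1 k)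

theorem hornComponent_submatrix (σ : Fin n ≃ Fin n') (j : Fin s) :
    hornComponent (B'.submatrix σ id) dd j = hornComponent B' dd j := by
  rw [hornComponent, hornComponent, ← Equiv.prod_comp σ]
  rfl

theorem const_eq_of_hornComponent_eq (hB : ∀ k, B k ≠ 0) {j : Fin s}
    (h : hornComponent B dd j = hornComponent B dd' j) : dd j = dd' j := by
  have hP : ∏ k, linForm (B k) ^ B k j ≠ 0 :=
    prod_ne_zero_iff.mpr fun k _ => zpow_ne_zero _ (linForm_ne_zero (hB k))
  exact C_injective _ _ (IsFractionRing.injective _ _ (mul_right_cancel₀ hP h))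

end HornParametrization

theorem minimal_horn_matrix_unique_general {n n' s : ℕ}
    (B : Matrix (Fin n) (Fin s) ℤ) (B' : Matrix (Fin n') (Fin s) ℤ)
    (hBmin : IsMinimalHorn B) (hB'min : IsMinimalHorn B')
    (dd dd' : Fin s → ℂ) (hd : ∀ j, dd j ≠ 0) (hd' : ∀ j, dd' j ≠ 0)
    (heq : ∀ j, hornComponent B dd j = hornComponent B' dd' j) :
    n = n' ∧ (∀ j, dd j = dd' j) ∧
      ∃ σ : Fin n ≃ Fin n', ∀ k j, B' (σ k) j = B k j := by
  choose F hF using exists_row_eq_of_hornComponent_eq hBmin hB'min hd hd' heq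
  choose G hG using exists_row_eq_of_hornComponent_eq hB'min hBmin hd' hd fun j => (heq j).symm
  let σ : Fin n ≃ Fin n' :=
    { toFun := F
      invFun := G
      left_inv := fun k => hBmin.injective (by rw [hG, hF])
      right_inv := fun k' => hB'min.injective (by rw [hF, hG]) }
  have hσ : B'.submatrix σ id = B := Matrix.ext fun k j => congrFun (hF k) j
  refine ⟨Fin.equiv_iff_eq.mp ⟨σ⟩, fun j => ?_, σ, fun k j => congrFun (hF k) j⟩
  refine const_eq_of_hornComponent_eq hBmin.1 ?_
  rw [heq, ← hσ, hornComponent_submatrix]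

/-- Two minimal Horn matrices (with nonzero constants) giving the same Horn
parametrization have the same number of rows, the same constants, and agree up to a
permutation of the rows: a Horn parametrization determines an essentially unique minimal
Horn matrix. -/
theorem minimal_horn_matrix_unique {n n' s : ℕ}
    (B : Matrix (Fin n) (Fin s) ℤ) (B' : Matrix (Fin n') (Fin s) ℤ)
    (hB : IsHornMatrix B) (hB' : IsHornMatrix B')
    (hBmin : IsMinimalHorn B) (hB'min : IsMinimalHorn B')
    (dd dd' : Fin s → ℂ) (hd : ∀ j, dd j ≠ 0) (hd' : ∀ j, dd' j ≠ 0)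
    (heq : ∀ j, hornComponent B dd j = hornComponent B' dd' j) :
    n = n' ∧ (∀ j, dd j = dd' j) ∧
      ∃ σ : Fin n ≃ Fin n', ∀ k j, B' (σ k) j = B k j :=
  minimal_horn_matrix_unique_general B B' hBmin hB'min dd dd' hd hd' heq
end
end

section
/- Let P ⊆ ℝ^{d} and Q ⊆ ℝ^{e} be full-dimensional lattice polytopes with irredundant facet presentations given by (n_i, a_i)_{i=1,…,r} and (n'_k, a'_k)_{k=1,…,r'} respectively, with lattice point sets A = P ∩ ℤ^d and A' = Q ∩ ℤ^e, and suppose P has strict linear precision for positive weights w = (w_m)_{m∈A} and Q has strict linear precision for positive weights w' = (w'_{m'})_{m'∈A'}. Equip the product P × Q ⊆ ℝ^{d+e} with the facet data ((n_i,0), a_i)_{i=1,…,r} and ((0,n'_k), a'_k)_{k=1,…,r'}, so that its lattice points are A × A' and β^{P×Q}_{(m,m')}(p,q) = β^P_m(p)·β^Q_{m'}(q). Then P × Q has strict linear precision for the weights w_{(m,m')} = w_m·w'_{m'}: for every (p,q) ∈ P × Q, β^{P×Q}_{w×w'}(p,q)·(p,q) = Σ_{(m,m')∈A×A'} w_m w'_{m'}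 β^P_m(p) β^Q_{m'}(q)·(m,m'). -/
open Finset

noncomputable section

/-- If `P ⊆ ℝ^d` and `Q ⊆ ℝ^e` have strict linear precision for positive
weights `w` and `w'`, then the product `P × Q` (with the product facet presentation, for which
`β^{P×Q}_{(m,m')}(p,q) = β^P_m(p)·β^Q_{m'}(q)` and lattice points `A × A'`) has strict linear
precision for the product weights `w_{(m,m')} = w_m·w'_{m'}`. -/
theorem product_strict_linear_precision {d e r r' : ℕ} (hd : 0 < d) (he : 0 < e)
    (n : Fin r → Fin d → ℤ) (a : Fin r → ℤ) (A : Finset (Fin d → ℤ))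
    (n' : Fin r' → Fin e → ℤ) (a' : Fin r' → ℤ) (A' : Finset (Fin e → ℤ))
    (hP : IsFacetPresentation n a A) (hQ : IsFacetPresentation n' a' A')
    (w : (Fin d → ℤ) → ℝ) (w' : (Fin e → ℤ) → ℝ)
    (hw : ∀ m ∈ A, 0 < w m) (hw' : ∀ m' ∈ A', 0 < w' m')
    (hslpP : StrictLinearPrecision n a A w) (hslpQ : StrictLinearPrecision n' a' A' w') :
    ∀ p ∈ latticePolytope n a, ∀ q ∈ latticePolytope n' a',
      (∑ mm ∈ A ×ˢ A', (w mm.1 * w' mm.2) * (toricBeta n a mm.1 p * toricBeta n' a' mm.2 q)) •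
          ((p, q) : (Fin d → ℝ) × (Fin e → ℝ)) =
        ∑ mm ∈ A ×ˢ A',
          ((w mm.1 * w' mm.2) * (toricBeta n a mm.1 p * toricBeta n' a' mm.2 q)) •
            ((coeZ mm.1, coeZ mm.2) : (Fin d → ℝ) × (Fin e → ℝ)) := by
  intro p hp q hq
  have hP1 := hslpP p hp
  have hQ1 := hslpQ q hq
  have hc : ∀ mm : (Fin d → ℤ) × (Fin e → ℤ),
      (w mm.1 * w' mm.2) * (toricBeta n a mm.1 p * toricBeta n' a' mm.2 q)
      = (w mm.1 * toricBeta n a mm.1 p) * (w' mm.2 * toricBeta n' a' mm.2 q) := fun _ => by ring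
  have hsum : (∑ mm ∈ A ×ˢ A',
      (w mm.1 * w' mm.2) * (toricBeta n a mm.1 p * toricBeta n' a' mm.2 q))
      = toricBetaW n a A w p * toricBetaW n' a' A' w' q := by
    simp only [hc]
    rw [toricBetaW, toricBetaW, Finset.sum_mul_sum, Finset.sum_product]
  rw [hsum]
  apply Prod.ext
  · rw [Prod.fst_sum]
    simp only [hc, Prod.smul_fst]
    rw [Finset.sum_product]
    have h1 : ∀ m ∈ A, (∑ m' ∈ A', ((w m * toricBeta n a m p) * (w' m' * toricBeta n' a' m' q))
        • coeZ m) = toricBetaW n' a' A' w' q • ((w m * toricBeta n a m p) • coeZ m) := by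
      intro m _
      rw [← Finset.sum_smul, ← Finset.mul_sum, mul_comm, mul_smul]
      rfl
    rw [Finset.sum_congr rfl h1, ← Finset.smul_sum, ← hP1, smul_smul, mul_comm]
  · rw [Prod.snd_sum]
    simp only [hc, Prod.smul_snd]
    rw [Finset.sum_product]
    have h1 : ∀ m ∈ A, (∑ m' ∈ A', ((w m * toricBeta n a m p) * (w' m' * toricBeta n' a' m' q))
        • coeZ m') = (w m * toricBeta n a m p) • (toricBetaW n' a' A' w' q • q) := by
      intro m _
      rw [hQ1, Finset.smul_sum]
      exact Finset.sum_congr rfl fun m' _ => (mul_smul _ _ _)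
    rw [Finset.sum_congr rfl h1, ← Finset.sum_smul, mul_smul]
    rfl
end
end

section
/- Let P = conv{(0,0),(2,0),(0,1),(1,1)} ⊆ ℝ² be the trapezoid, with lattice distance functions h_1(s,t) = s, h_2(s,t) = t, h_3(s,t) = 2−s−t, h_4(s,t) = 1−t, lattice points m_1 = (0,0), m_2 = (1,0), m_3 = (2,0), m_4 = (0,1), m_5 = (1,1), and toric blending polynomials β_j(p) = ∏_{i=1}^4 h_i(p)^{h_i(m_j)}. Then for every choice of positive weights w_1,…,w_5 > 0, the trapezoid fails strict linear precision: there exists p ∈ P with (Σ_{j=1}^5 w_j β_j(p))·p ≠ Σ_{j=1}^5 w_j β_j(p)·m_j. -/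
open Finset

noncomputable section

/-- The trapezoid `P = conv{(0,0),(2,0),(0,1),(1,1)} ⊆ ℝ²`. -/
def trapezoid : Set (ℝ × ℝ) :=
  {p | 0 ≤ p.1 ∧ 0 ≤ p.2 ∧ 0 ≤ 2 - p.1 - p.2 ∧ 0 ≤ 1 - p.2}

/-- The lattice distance functions of the trapezoid:
`h_1 = s`, `h_2 = t`, `h_3 = 2−s−t`, `h_4 = 1−t`. -/
def trapH : Fin 4 → ℝ × ℝ → ℝ :=
  ![fun p => p.1, fun p => p.2, fun p => 2 - p.1 - p.2, fun p => 1 - p.2]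

/-- The lattice points of the trapezoid:
`m_1 = (0,0)`, `m_2 = (1,0)`, `m_3 = (2,0)`, `m_4 = (0,1)`, `m_5 = (1,1)`. -/
def trapM : Fin 5 → ℝ × ℝ := ![(0, 0), (1, 0), (2, 0), (0, 1), (1, 1)]

/-- The exponent matrix `(h_i(m_j))` of the trapezoid. -/
def trapE : Matrix (Fin 4) (Fin 5) ℕ :=
  !![0, 1, 2, 0, 1;
     0, 0, 0, 1, 1;
     2, 1, 0, 1, 0;
     1, 1, 1, 0, 0]

/-- The toric blending polynomials `β_j(p) = ∏_{i=1}^4 h_i(p)^{h_i(m_j)}` of the trapezoid. -/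
def trapBeta (j : Fin 5) (p : ℝ × ℝ) : ℝ := ∏ i, trapH i p ^ trapE i j

/-- The trapezoid fails strict linear precision for every choice of positive
weights: there is a point `p ∈ P` with `(∑_j w_j β_j(p))·p ≠ ∑_j w_j β_j(p)·m_j`. -/
theorem trapezoid_no_strict_linear_precision (w : Fin 5 → ℝ) (hw : ∀ j, 0 < w j) :
    ∃ p ∈ trapezoid,
      (∑ j, w j * trapBeta j p) • p ≠ ∑ j, (w j * trapBeta j p) • trapM j := by
  by_contra h
  push_neg at h
  have h1 := congrArg Prod.snd (h (1/2, 1/4) (by norm_num [trapezoid]))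
  have h2 := congrArg Prod.snd (h (1/2, 1/2) (by norm_num [trapezoid]))
  have h3 := congrArg Prod.snd (h (1/2, 3/4) (by norm_num [trapezoid]))
  simp only [trapBeta, trapH, trapE, trapM, Fin.sum_univ_five, Fin.prod_univ_four,
    Matrix.cons_val', Matrix.cons_val_zero, Matrix.cons_val_one, Matrix.head_cons,
    Matrix.cons_val_fin_one, Matrix.empty_val', Matrix.head_fin_const,
    Matrix.cons_val_two, Matrix.cons_val_three, Matrix.cons_val_four, Matrix.tail_cons,
    Matrix.of_apply, Prod.smul_mk, Prod.mk_add_mk, Prod.snd_add, Prod.smul_snd,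
    smul_eq_mul] at h1 h2 h3
  norm_num at h1 h2 h3
  have := hw 0
  have := hw 1
  have := hw 2
  have := hw 3
  have := hw 4
  nlinarith [h1, h2, h3]
end
end

section
/- For (s,t) ∈ ℝ² with t ≠ 2, define β̂_1 = (1−t)(2−s−t)²/(2−t)², β̂_2 = 2s(1−t)(2−s−t)/(2−t)², β̂_3 = s²(1−t)/(2−t)², β̂_4 = t(2−s−t)/(2−t), β̂_5 = st/(2−t). Then: (i) β̂_1 + β̂_2 + β̂_3 + β̂_4 + β̂_5 = 1; (ii) β̂_2 + 2β̂_3 + β̂_5 = s and β̂_4 + β̂_5 = t, i.e. Σ_{j=1}^5 β̂_j·m_j = (s,t) for the lattice points m_1 = (0,0), m_2 = (1,0), m_3 = (2,0), m_4 = (0,1), m_5 = (1,1) of the trapezoid; and (iii) β̂_j(s,t) ≥ 0 for all j whenever (s,t) lies in the trapezoid P = {(s,t) : s ≥ 0, t ≥ 0, 2−s−t ≥ 0, 1−t ≥ 0}. Hence the trapezoid has rational linear precision for the weights (1,2,1,1,1). -/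
open Finset

noncomputable section

/-- The rational functions `β̂_1,…,β̂_5` giving rational linear precision for the trapezoid
with the weights `(1,2,1,1,1)`. -/
def trapBhat : Fin 5 → ℝ → ℝ → ℝ :=
  ![fun s t => (1 - t) * (2 - s - t) ^ 2 / (2 - t) ^ 2,
    fun s t => 2 * s * (1 - t) * (2 - s - t) / (2 - t) ^ 2,
    fun s t => s ^ 2 * (1 - t) / (2 - t) ^ 2,
    fun s t => t * (2 - s - t) / (2 - t),
    fun s t => s * t / (2 - t)]

/-- For `t ≠ 2`: (i) `∑_j β̂_j = 1`; (ii) `β̂_2 + 2β̂_3 + β̂_5 = s` and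
`β̂_4 + β̂_5 = t`, i.e. `∑_j β̂_j·m_j = (s,t)`; and (iii) each `β̂_j` is nonnegative on the
trapezoid.  Hence the trapezoid has rational linear precision for the weights `(1,2,1,1,1)`. -/
theorem trapezoid_rational_linear_precision :
    (∀ s t : ℝ, t ≠ 2 →
      (∑ j, trapBhat j s t) = 1 ∧
      (trapBhat 1 s t + 2 * trapBhat 2 s t + trapBhat 4 s t = s ∧
        trapBhat 3 s t + trapBhat 4 s t = t) ∧
      (∑ j, trapBhat j s t • trapM j) = (s, t)) ∧
    (∀ s t : ℝ, (s, t) ∈ trapezoid → ∀ j, 0 ≤ trapBhat j s t) := by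
  constructor
  · intro s t ht
    have h2 : (2 : ℝ) - t ≠ 0 := by intro h; apply ht; linarith
    have h2sq : ((2 : ℝ) - t) ^ 2 ≠ 0 := pow_ne_zero _ h2
    refine ⟨?_, ⟨?_, ?_⟩, ?_⟩
    · simp [trapBhat, Fin.sum_univ_five]
      field_simp
      ring
    · simp [trapBhat]
      field_simp
      ring
    · simp [trapBhat]
      field_simp
      ring
    · simp [trapBhat, trapM, Fin.sum_univ_five, Prod.ext_iff, Prod.smul_mk]
      constructor
      · field_simp
        ring
      · field_simp
        ring
  · rintro s t ⟨hs, ht, hst, ht1⟩ j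
    have h2 : (0:ℝ) < 2 - t := by linarith
    have h2sq : (0:ℝ) < (2 - t) ^ 2 := by positivity
    fin_cases j <;> simp [trapBhat] <;> positivity
end
end

section
/- In ℝ^5 with standard basis e_1,…,e_5, let m_1 = 0, m_2 = e_1, m_3 = e_5, m_4 = e_3 + e_5, m_5 = e_2, m_6 = e_1 + e_2, m_7 = e_4 + e_5, m_8 = e_3 + e_4 + e_5, and let P = conv{m_1,…,m_8}. Then: (i) P = {(t_1,…,t_5) ∈ ℝ^5 : 1 − t_2 − t_5 ≥ 0, t_5 − t_4 ≥ 0, t_2 ≥ 0, t_4 ≥ 0, 1 − t_1 − t_5 ≥ 0, t_1 ≥ 0, t_5 − t_3 ≥ 0, t_3 ≥ 0}; and (ii) the lattice points of P are exactly the eight listed points: P ∩ ℤ^5 = {m_1,…,m_8}. -/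
open Finset

noncomputable section

/-- The eight vertices `m_1 = 0`, `m_2 = e_1`, `m_3 = e_5`, `m_4 = e_3+e_5`, `m_5 = e_2`,
`m_6 = e_1+e_2`, `m_7 = e_4+e_5`, `m_8 = e_3+e_4+e_5` of the decomposable graphical model
polytope in `ℝ^5` (coordinates `t_1,…,t_5` indexed by `0,…,4`). -/
def graphM : Fin 8 → Fin 5 → ℝ :=
  ![![0, 0, 0, 0, 0],
    ![1, 0, 0, 0, 0],
    ![0, 0, 0, 0, 1],
    ![0, 0, 1, 0, 1],
    ![0, 1, 0, 0, 0],
    ![1, 1, 0, 0, 0],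
    ![0, 0, 0, 1, 1],
    ![0, 0, 1, 1, 1]]

lemma vec8_5 {α : Type*} (a b c d e f g h : α) : ![a,b,c,d,e,f,g,h] 5 = f := rfl
lemma vec8_6 {α : Type*} (a b c d e f g h : α) : ![a,b,c,d,e,f,g,h] 6 = g := rfl
lemma vec8_7 {α : Type*} (a b c d e f g h : α) : ![a,b,c,d,e,f,g,h] 7 = h := rfl

/-- Weights expressing a point of the polytope as a convex combination of the vertices. -/
def gw (t : Fin 5 → ℝ) : Fin 8 → ℝ :=
  ![1 - t 4 - max (t 0) (t 1), t 0 - min (t 0) (t 1),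
    t 4 - max (t 2) (t 3), t 2 - min (t 2) (t 3), t 1 - min (t 0) (t 1),
    min (t 0) (t 1), t 3 - min (t 2) (t 3), min (t 2) (t 3)]

lemma gm_mem_hull_aux (t : Fin 5 → ℝ)
    (h1 : 0 ≤ 1 - t 1 - t 4) (h2 : 0 ≤ t 4 - t 3) (h3 : 0 ≤ t 1) (h4 : 0 ≤ t 3)
    (h5 : 0 ≤ 1 - t 0 - t 4) (h6 : 0 ≤ t 0) (h7 : 0 ≤ t 4 - t 2) (h8 : 0 ≤ t 2) :
    t ∈ convexHull ℝ (Set.range graphM) := by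
  have hmm01 : max (t 0) (t 1) + min (t 0) (t 1) = t 0 + t 1 := max_add_min _ _
  have hmm23 : max (t 2) (t 3) + min (t 2) (t 3) = t 2 + t 3 := max_add_min _ _
  have hM01 : max (t 0) (t 1) ≤ 1 - t 4 := max_le (by linarith) (by linarith)
  have hM23 : max (t 2) (t 3) ≤ t 4 := max_le (by linarith) (by linarith)
  have hm01a : min (t 0) (t 1) ≤ t 0 := min_le_left _ _
  have hm01b : min (t 0) (t 1) ≤ t 1 := min_le_right _ _
  have hm01c : 0 ≤ min (t 0) (t 1) := le_min h6 h3
  have hm23a : min (t 2) (t 3) ≤ t 2 := min_le_left _ _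
  have hm23b : min (t 2) (t 3) ≤ t 3 := min_le_right _ _
  have hm23c : 0 ≤ min (t 2) (t 3) := le_min h8 h4
  have hsum : ∑ i, gw t i = 1 := by
    simp [Fin.sum_univ_eight, gw, vec8_5, vec8_6, vec8_7, -Matrix.cons_val']
    linarith
  have hnn : ∀ i ∈ Finset.univ, 0 ≤ gw t i := by
    intro i _
    fin_cases i <;> simp [gw, vec8_5, vec8_6, vec8_7, -Matrix.cons_val'] <;>
      first | linarith | (constructor <;> linarith)
  have hcm : Finset.univ.centerMass (gw t) graphM = t := by
    rw [Finset.centerMass_eq_of_sum_1 _ _ hsum]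
    funext l
    simp only [Finset.sum_apply, Pi.smul_apply, smul_eq_mul, Fin.sum_univ_eight]
    fin_cases l <;>
      simp [gw, graphM, vec8_5, vec8_6, vec8_7, -Matrix.cons_val'] <;> linarith
  rw [← hcm]
  exact Finset.centerMass_mem_convexHull _ hnn (by rw [hsum]; norm_num)
    (fun i _ => Set.mem_range_self i)

lemma zero_or_one_of_int {x : ℝ} (h0 : 0 ≤ x) (h1 : x ≤ 1) (hz : ∃ z : ℤ, x = (z : ℝ)) :
    x = 0 ∨ x = 1 := by
  obtain ⟨z, rfl⟩ := hz
  have hz0 : (0 : ℤ) ≤ z := by exact_mod_cast h0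
  have hz1 : z ≤ 1 := by exact_mod_cast h1
  interval_cases z
  · left; norm_num
  · right; norm_num

/-- (i) The convex hull of `m_1,…,m_8` is the polytope cut out by the eight
inequalities `1−t_2−t_5 ≥ 0`, `t_5−t_4 ≥ 0`, `t_2 ≥ 0`, `t_4 ≥ 0`, `1−t_1−t_5 ≥ 0`,
`t_1 ≥ 0`, `t_5−t_3 ≥ 0`, `t_3 ≥ 0`; and (ii) its lattice points are exactly `m_1,…,m_8`. -/
theorem graphical_model_polytope :
    convexHull ℝ (Set.range graphM) =
      {t : Fin 5 → ℝ |
        0 ≤ 1 - t 1 - t 4 ∧ 0 ≤ t 4 - t 3 ∧ 0 ≤ t 1 ∧ 0 ≤ t 3 ∧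
        0 ≤ 1 - t 0 - t 4 ∧ 0 ≤ t 0 ∧ 0 ≤ t 4 - t 2 ∧ 0 ≤ t 2} ∧
    {p : Fin 5 → ℝ | p ∈ convexHull ℝ (Set.range graphM) ∧ ∀ l, ∃ z : ℤ, p l = (z : ℝ)} =
      Set.range graphM := by
  have hpart1 : convexHull ℝ (Set.range graphM) =
      {t : Fin 5 → ℝ |
        0 ≤ 1 - t 1 - t 4 ∧ 0 ≤ t 4 - t 3 ∧ 0 ≤ t 1 ∧ 0 ≤ t 3 ∧
        0 ≤ 1 - t 0 - t 4 ∧ 0 ≤ t 0 ∧ 0 ≤ t 4 - t 2 ∧ 0 ≤ t 2} := by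
    apply le_antisymm
    · apply convexHull_min
      · rintro x ⟨i, rfl⟩
        refine ⟨?_, ?_, ?_, ?_, ?_, ?_, ?_, ?_⟩ <;>
          fin_cases i <;>
          simp [graphM, vec8_5, vec8_6, vec8_7, -Matrix.cons_val'] <;> norm_num
      · intro x hx y hy a b ha hb hab
        obtain ⟨hx1, hx2, hx3, hx4, hx5, hx6, hx7, hx8⟩ := hx
        obtain ⟨hy1, hy2, hy3, hy4, hy5, hy6, hy7, hy8⟩ := hy
        refine ⟨?_, ?_, ?_, ?_, ?_, ?_, ?_, ?_⟩ <;>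
          simp only [Pi.add_apply, Pi.smul_apply, smul_eq_mul]
        · nlinarith [mul_nonneg ha hx1, mul_nonneg hb hy1]
        · nlinarith [mul_nonneg ha hx2, mul_nonneg hb hy2]
        · nlinarith [mul_nonneg ha hx3, mul_nonneg hb hy3]
        · nlinarith [mul_nonneg ha hx4, mul_nonneg hb hy4]
        · nlinarith [mul_nonneg ha hx5, mul_nonneg hb hy5]
        · nlinarith [mul_nonneg ha hx6, mul_nonneg hb hy6]
        · nlinarith [mul_nonneg ha hx7, mul_nonneg hb hy7]
        · nlinarith [mul_nonneg ha hx8, mul_nonneg hb hy8]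
    · rintro t ⟨h1, h2, h3, h4, h5, h6, h7, h8⟩
      exact gm_mem_hull_aux t h1 h2 h3 h4 h5 h6 h7 h8
  refine ⟨hpart1, ?_⟩
  apply Set.Subset.antisymm
  · rintro p ⟨hp, hz⟩
    rw [hpart1] at hp
    obtain ⟨h1, h2, h3, h4, h5, h6, h7, h8⟩ := hp
    have c4 : p 4 = 0 ∨ p 4 = 1 :=
      zero_or_one_of_int (by linarith) (by linarith) (hz 4)
    have c0 : p 0 = 0 ∨ p 0 = 1 :=
      zero_or_one_of_int h6 (by linarith) (hz 0)
    have c1 : p 1 = 0 ∨ p 1 = 1 :=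
      zero_or_one_of_int h3 (by linarith) (hz 1)
    have c2 : p 2 = 0 ∨ p 2 = 1 :=
      zero_or_one_of_int h8 (by linarith) (hz 2)
    have c3 : p 3 = 0 ∨ p 3 = 1 :=
      zero_or_one_of_int h4 (by linarith) (hz 3)
    rcases c4 with c4 | c4
    · have e2 : p 2 = 0 := by linarith
      have e3 : p 3 = 0 := by linarith
      rcases c0 with c0 | c0 <;> rcases c1 with c1 | c1
      · exact ⟨0, by funext l; fin_cases l <;>
          simp [graphM, vec8_5, vec8_6, vec8_7, -Matrix.cons_val'] <;> linarith⟩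
      · exact ⟨4, by funext l; fin_cases l <;>
          simp [graphM, vec8_5, vec8_6, vec8_7, -Matrix.cons_val'] <;> linarith⟩
      · exact ⟨1, by funext l; fin_cases l <;>
          simp [graphM, vec8_5, vec8_6, vec8_7, -Matrix.cons_val'] <;> linarith⟩
      · exact ⟨5, by funext l; fin_cases l <;>
          simp [graphM, vec8_5, vec8_6, vec8_7, -Matrix.cons_val'] <;> linarith⟩
    · have e0 : p 0 = 0 := by linarith
      have e1 : p 1 = 0 := by linarith
      rcases c2 with c2 | c2 <;> rcases c3 with c3 | c3
      · exact ⟨2, by funext l; fin_cases l <;>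
          simp [graphM, vec8_5, vec8_6, vec8_7, -Matrix.cons_val'] <;> linarith⟩
      · exact ⟨6, by funext l; fin_cases l <;>
          simp [graphM, vec8_5, vec8_6, vec8_7, -Matrix.cons_val'] <;> linarith⟩
      · exact ⟨3, by funext l; fin_cases l <;>
          simp [graphM, vec8_5, vec8_6, vec8_7, -Matrix.cons_val'] <;> linarith⟩
      · exact ⟨7, by funext l; fin_cases l <;>
          simp [graphM, vec8_5, vec8_6, vec8_7, -Matrix.cons_val'] <;> linarith⟩
  · rintro _ ⟨i, rfl⟩
    refine ⟨subset_convexHull ℝ _ (Set.mem_range_self i), ?_⟩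
    intro l
    have h01 : graphM i l = 0 ∨ graphM i l = 1 := by
      fin_cases i <;> fin_cases l <;>
        simp [graphM, vec8_5, vec8_6, vec8_7, -Matrix.cons_val']
    rcases h01 with h | h
    · exact ⟨0, by rw [h]; norm_num⟩
    · exact ⟨1, by rw [h]; norm_num⟩
end
end
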